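/- arXiv:math/0301033 — 4 statements merged into one kernel-verified Lean document; each statement's English description precedes it below -/
import Mathlib

section
/- For every n ≥ 1, the number of permutations π of {1,…,n} with a_3(π) = 1 equals the binomial coefficient C(2n−1, n−3). -/
/-- Binomial coefficient `N` choose `k` where the lower index is an integer,
with the usual convention that it vanishes for negative lower index. -/
def genChoose (N : ℕ) (k : ℤ) : ℕ := if 0 ≤ k then N.choose k.toNat else 0

/-- `a3Count n π` is the number of A_3-pairs of `π`: pairs `(i,j)` with `i < j`,
`π j < π i`, and at least one index `k < i` with `π k < π j`. -/
noncomputable def a3Count (n : ℕ) (π : Equiv.Perm (Fin n)) : ℕ :=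
  Nat.card {p : Fin n × Fin n // p.1 < p.2 ∧ π p.2 < π p.1 ∧
    ∃ k : Fin n, k < p.1 ∧ π k < π p.2}

open Finset

namespace A3

variable {n : ℕ}

def app (σ : Equiv.Perm (Fin n)) (w : Fin (n + 1)) : Equiv.Perm (Fin (n + 1)) :=
  (finSuccEquivLast.trans σ.optionCongr).trans (finSuccEquiv' w).symm

lemma app_castSucc (σ : Equiv.Perm (Fin n)) (w : Fin (n + 1)) (i : Fin n) :
    app σ w i.castSucc = w.succAbove (σ i) := by
  simp [app, Equiv.trans_apply, finSuccEquivLast_castSucc, finSuccEquiv'_symm_some]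

lemma app_last (σ : Equiv.Perm (Fin n)) (w : Fin (n + 1)) :
    app σ w (Fin.last n) = w := by
  simp [app, Equiv.trans_apply, finSuccEquivLast_last, finSuccEquiv'_symm_none]

lemma coe_succAbove (w : Fin (n + 1)) (x : Fin n) :
    ((w.succAbove x : Fin (n + 1)) : ℕ) = if (x : ℕ) < (w : ℕ) then (x : ℕ) else (x : ℕ) + 1 := by
  rcases lt_or_ge (x.castSucc) w with h | h
  · rw [Fin.succAbove_of_castSucc_lt _ _ h]
    have : (x : ℕ) < (w : ℕ) := by simpa [Fin.lt_def] using h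
    simp [this]
  · rw [Fin.succAbove_of_le_castSucc _ _ h]
    have : (w : ℕ) ≤ (x : ℕ) := by simpa [Fin.le_def] using h
    simp [Nat.not_lt.2 this]

def cov (σ : Equiv.Perm (Fin n)) (w : ℕ) : ℕ :=
  #(univ.filter fun i : Fin n => (∃ k, k < i ∧ (σ k : ℕ) < w) ∧ w ≤ (σ i : ℕ))

def a3F (σ : Equiv.Perm (Fin n)) : ℕ :=
  ∑ j : Fin n, ∑ i : Fin n,
    if i < j ∧ σ j < σ i ∧ ∃ k, k < i ∧ σ k < σ j then 1 else 0

lemma exists_lt_castSucc {i : Fin n} {Q : Fin (n + 1) → Prop} :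
    (∃ k, k < i.castSucc ∧ Q k) ↔ ∃ k : Fin n, k < i ∧ Q k.castSucc := by
  constructor
  · rintro ⟨k, hk, hQ⟩
    have hk' : (k : ℕ) < (i : ℕ) := by simpa [Fin.lt_def] using hk
    have hkn : (k : ℕ) < n := lt_trans hk' i.isLt
    refine ⟨⟨(k : ℕ), hkn⟩, ?_, ?_⟩
    · show ((⟨(k : ℕ), hkn⟩ : Fin n) : ℕ) < (i : ℕ)
      exact hk'
    · have : (⟨(k : ℕ), hkn⟩ : Fin n).castSucc = k := by
        apply Fin.ext; simp
      rwa [this]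
  · rintro ⟨k, hk, hQ⟩
    exact ⟨k.castSucc, Fin.castSucc_lt_castSucc_iff.2 hk, hQ⟩

lemma cov_app (σ : Equiv.Perm (Fin n)) (w : Fin (n + 1)) (u : ℕ) :
    cov (app σ w) u
      = cov σ (if u ≤ (w : ℕ) then u else u - 1)
        + (if 1 ≤ u ∧ u ≤ (w : ℕ) then 1 else 0) := by
  classical
  set d : ℕ := if u ≤ (w : ℕ) then u else u - 1 with hd
  have key_lt : ∀ x : Fin n, ((w.succAbove x : Fin (n + 1)) : ℕ) < u ↔ (x : ℕ) < d := by
    intro x; rw [coe_succAbove, hd]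
    have := w.isLt; have := x.isLt
    split_ifs <;> omega
  have key_le : ∀ x : Fin n, u ≤ ((w.succAbove x : Fin (n + 1)) : ℕ) ↔ d ≤ (x : ℕ) := by
    intro x; rw [coe_succAbove, hd]
    have := w.isLt; have := x.isLt
    split_ifs <;> omega
  unfold cov
  rw [card_filter, card_filter, Fin.sum_univ_castSucc]
  have hcast : ∀ i : Fin n,
      ((∃ k, k < i.castSucc ∧ ((app σ w) k : ℕ) < u) ∧ u ≤ ((app σ w) i.castSucc : ℕ))
      ↔ ((∃ k, k < i ∧ (σ k : ℕ) < d) ∧ d ≤ (σ i : ℕ)) := by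
    intro i
    rw [exists_lt_castSucc (Q := fun k => ((app σ w) k : ℕ) < u), app_castSucc, key_le]
    constructor
    · rintro ⟨⟨k, hk, hku⟩, h2⟩
      rw [app_castSucc, key_lt] at hku
      exact ⟨⟨k, hk, hku⟩, h2⟩
    · rintro ⟨⟨k, hk, hku⟩, h2⟩
      refine ⟨⟨k, hk, ?_⟩, h2⟩
      rw [app_castSucc, key_lt]; exact hku
  have hlast : ((∃ k, k < Fin.last n ∧ ((app σ w) k : ℕ) < u) ∧ u ≤ ((app σ w) (Fin.last n) : ℕ))
      ↔ (1 ≤ u ∧ u ≤ (w : ℕ)) := by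
    rw [app_last]
    constructor
    · rintro ⟨⟨k, _, hku⟩, hu⟩
      exact ⟨by omega, hu⟩
    · rintro ⟨h1, h2⟩
      have hn : 0 < n := by have := w.isLt; omega
      refine ⟨⟨(σ.symm ⟨0, by omega⟩).castSucc, ?_, ?_⟩, h2⟩
      · show ((σ.symm ⟨0, by omega⟩).castSucc : ℕ) < n
        simpa using (σ.symm ⟨0, by omega⟩).isLt
      · rw [app_castSucc, coe_succAbove]
        have h0 : (σ (σ.symm ⟨0, by omega⟩) : ℕ) = 0 := by
          rw [Equiv.apply_symm_apply]
        rw [h0]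
        simp only [if_pos (by omega : 0 < (w : ℕ))]
        omega
      
  rw [sum_congr rfl fun i _ => by rw [if_congr (hcast i) rfl rfl], if_congr hlast rfl rfl]

lemma lt_succAbove_iff (w : Fin (n + 1)) (x : Fin n) :
    w < w.succAbove x ↔ (w : ℕ) ≤ (x : ℕ) := by
  rw [Fin.lt_def, coe_succAbove]; split_ifs <;> omega

lemma succAbove_lt_iff'' (w : Fin (n + 1)) (x : Fin n) :
    w.succAbove x < w ↔ (x : ℕ) < (w : ℕ) := by
  rw [Fin.lt_def, coe_succAbove]; split_ifs <;> omega

lemma succAbove_lt_succAbove (w : Fin (n + 1)) (x y : Fin n) :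
    w.succAbove x < w.succAbove y ↔ x < y := by
  rw [Fin.lt_def, Fin.lt_def, coe_succAbove, coe_succAbove]
  split_ifs <;> omega

lemma a3F_app (σ : Equiv.Perm (Fin n)) (w : Fin (n + 1)) :
    a3F (app σ w) = a3F σ + cov σ (w : ℕ) := by
  classical
  unfold a3F
  rw [Fin.sum_univ_castSucc]
  have hrow : ∀ j : Fin n,
      (∑ i : Fin (n + 1), if i < j.castSucc ∧ (app σ w) j.castSucc < (app σ w) i ∧
          ∃ k, k < i ∧ (app σ w) k < (app σ w) j.castSucc then 1 else 0)
      = ∑ i : Fin n, if i < j ∧ σ j < σ i ∧ ∃ k, k < i ∧ σ k < σ j then 1 else 0 := by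
    intro j
    rw [Fin.sum_univ_castSucc]
    have hlast0 : ¬ (Fin.last n < j.castSucc ∧ (app σ w) j.castSucc < (app σ w) (Fin.last n) ∧
        ∃ k, k < Fin.last n ∧ (app σ w) k < (app σ w) j.castSucc) := by
      rintro ⟨h, -, -⟩
      exact absurd h (not_lt.2 (Fin.castSucc_lt_last j).le)
    rw [if_neg hlast0, add_zero]
    refine sum_congr rfl fun i _ => ?_
    refine if_congr ?_ rfl rfl
    rw [app_castSucc, app_castSucc, Fin.castSucc_lt_castSucc_iff, succAbove_lt_succAbove]
    constructor
    · rintro ⟨h1, h2, h3⟩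
      refine ⟨h1, h2, ?_⟩
      rw [exists_lt_castSucc (Q := fun k => (app σ w) k < w.succAbove (σ j))] at h3
      obtain ⟨k, hk, hQ⟩ := h3
      rw [app_castSucc, succAbove_lt_succAbove] at hQ
      exact ⟨k, hk, hQ⟩
    · rintro ⟨h1, h2, h3⟩
      refine ⟨h1, h2, ?_⟩
      rw [exists_lt_castSucc (Q := fun k => (app σ w) k < w.succAbove (σ j))]
      obtain ⟨k, hk, hQ⟩ := h3
      refine ⟨k, hk, ?_⟩
      rw [app_castSucc, succAbove_lt_succAbove]
      exact hQ
  have hlastrow :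
      (∑ i : Fin (n + 1), if i < Fin.last n ∧ (app σ w) (Fin.last n) < (app σ w) i ∧
          ∃ k, k < i ∧ (app σ w) k < (app σ w) (Fin.last n) then 1 else 0)
      = cov σ (w : ℕ) := by
    rw [Fin.sum_univ_castSucc, if_neg (by rintro ⟨h, -, -⟩; exact lt_irrefl _ h), add_zero]
    unfold cov
    rw [card_filter]
    refine sum_congr rfl fun i _ => ?_
    refine if_congr ?_ rfl rfl
    rw [app_last, app_castSucc, lt_succAbove_iff]
    constructor
    · rintro ⟨-, h2, h3⟩
      refine ⟨?_, h2⟩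
      rw [exists_lt_castSucc (Q := fun k => (app σ w) k < w)] at h3
      obtain ⟨k, hk, hQ⟩ := h3
      rw [app_castSucc, succAbove_lt_iff''] at hQ
      exact ⟨k, hk, hQ⟩
    · rintro ⟨h3, h2⟩
      refine ⟨Fin.castSucc_lt_last i, h2, ?_⟩
      rw [exists_lt_castSucc (Q := fun k => (app σ w) k < w)]
      obtain ⟨k, hk, hQ⟩ := h3
      refine ⟨k, hk, ?_⟩
      rw [app_castSucc, succAbove_lt_iff'']
      exact hQ
  rw [hlastrow, sum_congr rfl fun j _ => hrow j]

noncomputable def appEquiv (n : ℕ) : Equiv.Perm (Fin n) × Fin (n + 1) ≃ Equiv.Perm (Fin (n + 1)) := by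
  refine Equiv.ofBijective (fun p => app p.1 p.2) ?_
  rw [Fintype.bijective_iff_injective_and_card]
  constructor
  · rintro ⟨σ, w⟩ ⟨σ', w'⟩ h
    simp only at h
    have hw : w = w' := by rw [← app_last σ w, ← app_last σ' w', h]
    have hσ : σ = σ' := by
      ext i
      have := DFunLike.congr_fun h i.castSucc
      rw [app_castSucc, app_castSucc, ← hw] at this
      have := Fin.succAbove_right_injective (p := w) this
      rw [this]
    rw [hσ, hw]
  · simp [Fintype.card_perm, Nat.factorial_succ, mul_comm]

lemma sum_app (F : Equiv.Perm (Fin (n + 1)) → ℕ) :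
    ∑ π : Equiv.Perm (Fin (n + 1)), F π
      = ∑ σ : Equiv.Perm (Fin n), ∑ w : Fin (n + 1), F (app σ w) := by
  rw [← Equiv.sum_comp (appEquiv n) F, Fintype.sum_prod_type]
  rfl

def cnt (p : ℕ → Prop) [DecidablePred p] (m a : ℕ) : ℕ :=
  ∑ u ∈ range m, if p u ∧ a ≤ u then 1 else 0

lemma cnt_succ_top (p : ℕ → Prop) [DecidablePred p] (m a : ℕ) :
    cnt p (m + 1) a = cnt p m a + (if p m ∧ a ≤ m then 1 else 0) := by
  unfold cnt; rw [sum_range_succ]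

lemma cnt_eq_zero (p : ℕ → Prop) [DecidablePred p] {m a : ℕ} (h : m ≤ a) :
    cnt p m a = 0 := by
  unfold cnt
  refine sum_eq_zero fun u hu => ?_
  rw [mem_range] at hu
  rw [if_neg (by omega)]

lemma cnt_anti (p : ℕ → Prop) [DecidablePred p] (m : ℕ) {a b : ℕ} (hab : a ≤ b) :
    cnt p m b ≤ cnt p m a := by
  unfold cnt
  refine sum_le_sum fun u _ => ?_
  by_cases hp : p u
  · simp only [hp, true_and]
    split_ifs <;> omega
  · simp [hp]

lemma cnt_split (p : ℕ → Prop) [DecidablePred p] (m a : ℕ) :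
    cnt p m a = cnt p m (a + 1) + (if p a ∧ a < m then 1 else 0) := by
  induction m with
  | zero => simp [cnt]
  | succ m ih =>
    rw [cnt_succ_top, cnt_succ_top, ih]
    rcases Nat.lt_trichotomy a m with h | rfl | h
    · by_cases h1 : p m <;> by_cases h2 : p a <;>
        simp only [h1, h2, true_and, false_and, if_false] <;> split_ifs <;> omega
    · by_cases h1 : p a <;> simp only [h1, true_and, false_and, if_false] <;>
        split_ifs <;> omega
    · by_cases h1 : p m <;> by_cases h2 : p a <;>
        simp only [h1, h2, true_and, false_and, if_false] <;> split_ifs <;> omega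

lemma count_above (p : ℕ → Prop) [DecidablePred p] (m j : ℕ) :
    (∑ w ∈ range m, if p w ∧ cnt p m (w + 1) = j then 1 else 0)
      = if j < cnt p m 0 then 1 else 0 := by
  induction m generalizing j with
  | zero => simp [cnt]
  | succ m ih =>
    rw [sum_range_succ]
    have hmm : cnt p (m + 1) (m + 1) = 0 := cnt_eq_zero p le_rfl
    by_cases hp : p m
    · have hcnt : ∀ w, w < m → cnt p (m + 1) (w + 1) = cnt p m (w + 1) + 1 := by
        intro w hw
        rw [cnt_succ_top, if_pos ⟨hp, by omega⟩]
      have h0 : cnt p (m + 1) 0 = cnt p m 0 + 1 := by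
        rw [cnt_succ_top, if_pos ⟨hp, by omega⟩]
      rcases Nat.eq_zero_or_pos j with hj | hj
      · subst hj
        have hz : (∑ w ∈ range m, if p w ∧ cnt p (m + 1) (w + 1) = 0 then 1 else 0) = 0 := by
          refine sum_eq_zero fun w hw => ?_
          rw [mem_range] at hw
          rw [if_neg]
          rintro ⟨-, hc⟩
          rw [hcnt w hw] at hc
          omega
        rw [hz, if_pos ⟨hp, hmm⟩, h0, if_pos (by omega)]
      · obtain ⟨j', rfl⟩ : ∃ j', j = j' + 1 := ⟨j - 1, by omega⟩
        have hs : (∑ w ∈ range m, if p w ∧ cnt p (m + 1) (w + 1) = j' + 1 then 1 else 0)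
            = ∑ w ∈ range m, if p w ∧ cnt p m (w + 1) = j' then 1 else 0 := by
          refine sum_congr rfl fun w hw => ?_
          rw [mem_range] at hw
          refine if_congr ?_ rfl rfl
          rw [hcnt w hw]
          constructor
          · rintro ⟨h1, h2⟩; exact ⟨h1, by omega⟩
          · rintro ⟨h1, h2⟩; exact ⟨h1, by omega⟩
        have hne : ¬(p m ∧ cnt p (m + 1) (m + 1) = j' + 1) := by
          intro hcon
          have h2 := hcon.2
          rw [hmm] at h2
          omega
        rw [hs, ih j', if_neg hne, h0]
        split_ifs <;> omega
    · have hcnt : ∀ a, cnt p (m + 1) a = cnt p m a := by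
        intro a; rw [cnt_succ_top, if_neg (fun hcon => hp hcon.1), add_zero]
      have hs : (∑ w ∈ range m, if p w ∧ cnt p (m + 1) (w + 1) = j then 1 else 0)
          = ∑ w ∈ range m, if p w ∧ cnt p m (w + 1) = j then 1 else 0 := by
        refine sum_congr rfl fun w _ => if_congr (by rw [hcnt]) rfl rfl
      rw [hs,
        show (if p m ∧ cnt p (m + 1) (m + 1) = j then 1 else 0) = 0 from
          if_neg (fun hcon => hp hcon.1),
        add_zero, ih j, hcnt]

-- Part 3: gap statistics and transition laws
variable {n : ℕ}

lemma cov_zero' (σ : Equiv.Perm (Fin n)) : cov σ 0 = 0 := by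
  unfold cov
  rw [card_eq_zero, filter_eq_empty_iff]
  rintro i - ⟨⟨k, -, hk⟩, -⟩
  omega

lemma cov_ge (σ : Equiv.Perm (Fin n)) {u : ℕ} (h : n ≤ u) : cov σ u = 0 := by
  unfold cov
  rw [card_eq_zero, filter_eq_empty_iff]
  rintro i - ⟨-, h2⟩
  have := (σ i).isLt
  omega

def zge (σ : Equiv.Perm (Fin n)) (a : ℕ) : ℕ := cnt (fun u => cov σ u = 0) (n + 1) a

def znum (σ : Equiv.Perm (Fin n)) : ℕ := zge σ 0

def zab (σ : Equiv.Perm (Fin n)) (g : ℕ) : ℕ := zge σ (g + 1)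

def mult (σ : Equiv.Perm (Fin n)) (v : ℕ) : ℕ :=
  cnt (fun u => cov σ u = 1 ∧ zab σ u = v) (n + 1) 0

def mge (σ : Equiv.Perm (Fin n)) (v a : ℕ) : ℕ :=
  cnt (fun u => cov σ u = 1 ∧ zab σ u = v) (n + 1) a

lemma zge_anti (σ : Equiv.Perm (Fin n)) {a b : ℕ} (h : a ≤ b) : zge σ b ≤ zge σ a :=
  cnt_anti _ _ h

lemma znum_le (σ : Equiv.Perm (Fin n)) : znum σ ≤ n + 1 := by
  unfold znum zge cnt
  calc (∑ u ∈ range (n+1), if cov σ u = 0 ∧ 0 ≤ u then 1 else 0)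
      ≤ ∑ _u ∈ range (n+1), 1 := sum_le_sum fun u _ => by split_ifs <;> omega
    _ = n + 1 := by simp

lemma zge_succ_of_cov_eq_zero (σ : Equiv.Perm (Fin n)) {a : ℕ} (ha : a ≤ n)
    (h : cov σ a = 0) : zge σ a = zge σ (a + 1) + 1 := by
  unfold zge
  rw [cnt_split (fun u => cov σ u = 0) (n + 1) a, if_pos ⟨h, by omega⟩]

lemma zge_succ_of_cov_ne_zero (σ : Equiv.Perm (Fin n)) {a : ℕ}
    (h : cov σ a ≠ 0) : zge σ a = zge σ (a + 1) := by
  unfold zge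
  rw [cnt_split (fun u => cov σ u = 0) (n + 1) a, if_neg (fun hc => h hc.1), add_zero]

lemma two_le_znum (σ : Equiv.Perm (Fin n)) (hn : 1 ≤ n) : 2 ≤ znum σ := by
  have h1 : znum σ = zge σ 1 + 1 :=
    zge_succ_of_cov_eq_zero σ (by omega) (cov_zero' σ)
  have h2 : 1 ≤ zge σ 1 := by
    unfold zge cnt
    have hmem : n ∈ range (n + 1) := by simp
    calc (1 : ℕ) = if cov σ n = 0 ∧ 1 ≤ n then 1 else 0 := by
          rw [if_pos ⟨cov_ge σ le_rfl, hn⟩]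
      _ ≤ _ := single_le_sum (f := fun u => if cov σ u = 0 ∧ 1 ≤ u then 1 else 0)
          (fun u _ => by positivity) hmem
  omega

lemma zab_lt_znum (σ : Equiv.Perm (Fin n)) (g : ℕ) : zab σ g < znum σ := by
  have h1 : znum σ = zge σ 1 + 1 :=
    zge_succ_of_cov_eq_zero σ (by omega) (cov_zero' σ)
  have h2 : zab σ g ≤ zge σ 1 := zge_anti σ (by omega)
  omega

/-- core computation for the profile of `app σ w` -/
lemma zge_app_succ (σ : Equiv.Perm (Fin n)) (w : Fin (n + 1)) (a : ℕ) :
    zge (app σ w) (a + 1) = zge σ (max (w : ℕ) a) := by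
  unfold zge cnt
  rw [Finset.sum_range_succ' _ (n + 1)]
  have h0 : (if cov (app σ w) 0 = 0 ∧ a + 1 ≤ 0 then 1 else 0) = 0 := by
    rw [if_neg (by omega)]
  rw [h0, add_zero]
  refine sum_congr rfl fun t _ => ?_
  show (if cov (app σ w) (t + 1) = 0 ∧ a + 1 ≤ t + 1 then 1 else 0)
      = if cov σ t = 0 ∧ max (w : ℕ) a ≤ t then 1 else 0
  rcases le_or_gt (t + 1) (w : ℕ) with h | h
  · have hcov : cov (app σ w) (t + 1) = cov σ (t + 1) + 1 := by
      rw [cov_app, if_pos h, if_pos ⟨by omega, h⟩]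
    rw [hcov, if_neg (by omega), if_neg (by omega)]
  · have hcov : cov (app σ w) (t + 1) = cov σ t := by
      rw [cov_app, if_neg (by omega), if_neg (by omega), add_zero, Nat.add_sub_cancel]
    rw [hcov]
    refine if_congr ?_ rfl rfl
    constructor
    · rintro ⟨h1, h2⟩; exact ⟨h1, by omega⟩
    · rintro ⟨h1, h2⟩; exact ⟨h1, by omega⟩

lemma znum_app (σ : Equiv.Perm (Fin n)) (w : Fin (n + 1)) :
    znum (app σ w) = 1 + zge σ (w : ℕ) := by
  unfold znum
  have h1 : zge (app σ w) 0 = zge (app σ w) 1 + 1 :=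
    zge_succ_of_cov_eq_zero (app σ w) (by omega) (cov_zero' _)
  have h2 : zge (app σ w) 1 = zge σ (max (w : ℕ) 0) := zge_app_succ σ w 0
  rw [h1, h2, Nat.max_zero]
  omega

lemma zab_app (σ : Equiv.Perm (Fin n)) (w : Fin (n + 1)) (g : ℕ) :
    zab (app σ w) g = zge σ (max (w : ℕ) g) := zge_app_succ σ w g

lemma zab_app_of_le (σ : Equiv.Perm (Fin n)) (w : Fin (n + 1)) {g : ℕ} (h : g ≤ (w : ℕ)) :
    zab (app σ w) g = zge σ (w : ℕ) := by
  rw [zab_app, max_eq_left h]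

lemma zab_app_of_gt (σ : Equiv.Perm (Fin n)) (w : Fin (n + 1)) {g : ℕ} (h : (w : ℕ) < g) :
    zab (app σ w) g = zge σ g := by
  rw [zab_app, max_eq_right (by omega)]

def Z1 (σ : Equiv.Perm (Fin n)) (W : ℕ) : ℕ :=
  ∑ u ∈ range (n + 1), if cov σ u = 0 ∧ 1 ≤ u ∧ u ≤ W then 1 else 0

lemma partitionZ (σ : Equiv.Perm (Fin n)) (W : ℕ) :
    znum σ = 1 + Z1 σ W + zge σ (W + 1) := by
  have hznum : znum σ = ∑ u ∈ range (n + 1), if cov σ u = 0 ∧ 0 ≤ u then 1 else 0 := rfl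
  have hzge : zge σ (W + 1)
      = ∑ u ∈ range (n + 1), if cov σ u = 0 ∧ W + 1 ≤ u then 1 else 0 := rfl
  rw [hznum, hzge]
  unfold Z1
  have key : ∀ u, (if cov σ u = 0 ∧ 0 ≤ u then 1 else 0)
      = (if cov σ u = 0 ∧ u = 0 then 1 else 0)
        + ((if cov σ u = 0 ∧ 1 ≤ u ∧ u ≤ W then 1 else 0)
        + (if cov σ u = 0 ∧ W + 1 ≤ u then 1 else 0)) := by
    intro u
    by_cases hc : cov σ u = 0
    · simp only [hc, true_and]
      split_ifs <;> omega
    · simp [hc]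
  rw [sum_congr rfl fun u _ => key u, sum_add_distrib, sum_add_distrib]
  have h1 : (∑ u ∈ range (n + 1), if cov σ u = 0 ∧ u = 0 then 1 else 0) = 1 := by
    rw [Finset.sum_eq_single_of_mem 0 (by simp)]
    · rw [if_pos ⟨cov_zero' σ, rfl⟩]
    · intro u _ hu
      rw [if_neg (fun hcon => hu hcon.2)]
  rw [h1]
  omega

lemma cov_one_facts (σ : Equiv.Perm (Fin n)) {u : ℕ} (h : cov σ u = 1) :
    u < n ∧ 1 ≤ zab σ u := by
  have hu : u < n := by
    by_contra hc
    rw [cov_ge σ (by omega)] at h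
    omega
  refine ⟨hu, ?_⟩
  unfold zab zge cnt
  have hmem : n ∈ range (n + 1) := by simp
  calc (1 : ℕ) = if cov σ n = 0 ∧ u + 1 ≤ n then 1 else 0 := by
        rw [if_pos ⟨cov_ge σ le_rfl, by omega⟩]
    _ ≤ _ := single_le_sum (f := fun x => if cov σ x = 0 ∧ u + 1 ≤ x then 1 else 0)
        (fun x _ => by positivity) hmem

lemma mult_zero_eq (σ : Equiv.Perm (Fin n)) : mult σ 0 = 0 := by
  unfold mult cnt
  refine sum_eq_zero fun u _ => ?_
  rw [if_neg]
  rintro ⟨⟨h1, h2⟩, -⟩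
  have := (cov_one_facts σ h1).2
  omega

lemma mult_eq_zero_of_ge (σ : Equiv.Perm (Fin n)) {v : ℕ} (hv : znum σ ≤ v) :
    mult σ v = 0 := by
  unfold mult cnt
  refine sum_eq_zero fun u _ => ?_
  rw [if_neg]
  rintro ⟨⟨h1, h2⟩, -⟩
  have := zab_lt_znum σ u
  omega

lemma mge_of_cov_zero (σ : Equiv.Perm (Fin n)) {W : ℕ} (v : ℕ)
    (h0 : cov σ W = 0) :
    mge σ v W = if v ≤ zge σ (W + 1) then mult σ v else 0 := by
  by_cases hv : v ≤ zge σ (W + 1)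
  · rw [if_pos hv]
    unfold mge mult cnt
    refine sum_congr rfl fun u hu => ?_
    rw [mem_range] at hu
    refine if_congr ?_ rfl rfl
    constructor
    · rintro ⟨h1, -⟩; exact ⟨h1, by omega⟩
    · rintro ⟨⟨h1, h2⟩, -⟩
      refine ⟨⟨h1, h2⟩, ?_⟩
      by_contra hlt
      push_neg at hlt
      rcases le_or_gt W n with hWn | hWn
      · have hanti : zge σ W ≤ zge σ (u + 1) := zge_anti σ (by omega)
        have hsplit : zge σ W = zge σ (W + 1) + 1 := zge_succ_of_cov_eq_zero σ hWn h0
        have h2' : zge σ (u + 1) = v := h2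
        omega
      · have hz : zge σ (W + 1) = 0 := cnt_eq_zero _ (by omega)
        have hzz := (cov_one_facts σ h1).2
        have h2' : zab σ u = v := h2
        omega
  · rw [if_neg hv]
    unfold mge cnt
    refine sum_eq_zero fun u _ => ?_
    rw [if_neg]
    rintro ⟨⟨h1, h2⟩, h3⟩
    have hne : u ≠ W := fun hEq => by rw [hEq, h0] at h1; omega
    have hanti : zge σ (u + 1) ≤ zge σ (W + 1) := zge_anti σ (by omega)
    have h2' : zge σ (u + 1) = v := h2
    omega

lemma mult_app (σ : Equiv.Perm (Fin n)) (w : Fin (n + 1)) (v : ℕ) :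
    mult (app σ w) v
      = (if zge σ (w : ℕ) = v then Z1 σ (w : ℕ) else 0) + mge σ v (w : ℕ) := by
  unfold mult cnt
  rw [Finset.sum_range_succ' _ (n + 1)]
  have h0 : (if (cov (app σ w) 0 = 1 ∧ zab (app σ w) 0 = v) ∧ 0 ≤ 0 then 1 else 0) = 0 := by
    rw [if_neg]
    rintro ⟨⟨h1, -⟩, -⟩
    rw [cov_zero'] at h1
    omega
  rw [h0, add_zero]
  have key : ∀ t, ((if (cov (app σ w) (t + 1) = 1 ∧ zab (app σ w) (t + 1) = v) ∧ 0 ≤ t + 1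
        then 1 else 0) : ℕ)
      = (if cov σ (t + 1) = 0 ∧ t + 1 ≤ (w : ℕ) ∧ zge σ (w : ℕ) = v then 1 else 0)
        + (if (cov σ t = 1 ∧ zab σ t = v) ∧ (w : ℕ) ≤ t then 1 else 0) := by
    intro t
    rcases le_or_gt (t + 1) (w : ℕ) with h | h
    · have hcov : cov (app σ w) (t + 1) = cov σ (t + 1) + 1 := by
        rw [cov_app, if_pos h, if_pos ⟨by omega, h⟩]
      have hzab : zab (app σ w) (t + 1) = zge σ (w : ℕ) := zab_app_of_le σ w h
      rw [hcov, hzab,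
        show (if (cov σ t = 1 ∧ zab σ t = v) ∧ (w : ℕ) ≤ t then 1 else 0) = 0 from
          if_neg (by rintro ⟨-, h3⟩; omega), add_zero]
      refine if_congr ?_ rfl rfl
      constructor
      · rintro ⟨⟨h1, h2⟩, -⟩; exact ⟨by omega, h, h2⟩
      · rintro ⟨h1, -, h3⟩; exact ⟨⟨by omega, h3⟩, by omega⟩
    · have hcov : cov (app σ w) (t + 1) = cov σ t := by
        rw [cov_app, if_neg (by omega), if_neg (by omega), add_zero, Nat.add_sub_cancel]
      have hzab : zab (app σ w) (t + 1) = zge σ (t + 1) := zab_app_of_gt σ w h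
      rw [hcov, hzab,
        show (if cov σ (t + 1) = 0 ∧ t + 1 ≤ (w : ℕ) ∧ zge σ (w : ℕ) = v then 1 else 0) = 0
          from if_neg (by rintro ⟨-, h2, -⟩; omega)]
      rw [Nat.zero_add]
      refine if_congr ?_ rfl rfl
      constructor
      · rintro ⟨⟨h1, h2⟩, -⟩; exact ⟨⟨h1, h2⟩, by omega⟩
      · rintro ⟨⟨h1, h2⟩, -⟩; exact ⟨⟨h1, h2⟩, by omega⟩
  rw [sum_congr rfl fun t _ => key t, sum_add_distrib]
  congr 1
  · -- first piece equals the Z1 indicator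
    by_cases hzv : zge σ (w : ℕ) = v
    · rw [if_pos hzv]
      unfold Z1
      -- reindex: sum over t of g (t+1) = sum over u of g u
      have hsplit1 : (∑ u ∈ range (n + 2), if cov σ u = 0 ∧ 1 ≤ u ∧ u ≤ (w : ℕ) then 1 else 0)
          = (∑ t ∈ range (n + 1), if cov σ (t + 1) = 0 ∧ 1 ≤ t + 1 ∧ t + 1 ≤ (w : ℕ)
              then 1 else 0) + (if cov σ 0 = 0 ∧ 1 ≤ 0 ∧ 0 ≤ (w : ℕ) then 1 else 0) := by
        rw [Finset.sum_range_succ' _ (n + 1)]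
      have hsplit2 : (∑ u ∈ range (n + 2), if cov σ u = 0 ∧ 1 ≤ u ∧ u ≤ (w : ℕ) then 1 else 0)
          = (∑ u ∈ range (n + 1), if cov σ u = 0 ∧ 1 ≤ u ∧ u ≤ (w : ℕ) then 1 else 0)
            + (if cov σ (n + 1) = 0 ∧ 1 ≤ n + 1 ∧ n + 1 ≤ (w : ℕ) then 1 else 0) := by
        rw [Finset.sum_range_succ]
      have hz0 : (if cov σ 0 = 0 ∧ 1 ≤ 0 ∧ 0 ≤ (w : ℕ) then 1 else 0) = 0 :=
        if_neg (by rintro ⟨-, h2, -⟩; omega)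
      have hztop : (if cov σ (n + 1) = 0 ∧ 1 ≤ n + 1 ∧ n + 1 ≤ (w : ℕ) then 1 else 0) = 0 :=
        if_neg (by rintro ⟨-, -, h3⟩; have := w.isLt; omega)
      have heq : (∑ t ∈ range (n + 1), if cov σ (t + 1) = 0 ∧ t + 1 ≤ (w : ℕ) ∧ zge σ (w:ℕ) = v
            then 1 else 0)
          = ∑ t ∈ range (n + 1), if cov σ (t + 1) = 0 ∧ 1 ≤ t + 1 ∧ t + 1 ≤ (w : ℕ)
            then 1 else 0 := by
        refine sum_congr rfl fun t _ => if_congr ?_ rfl rfl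
        constructor
        · rintro ⟨h1, h2, -⟩; exact ⟨h1, by omega, h2⟩
        · rintro ⟨h1, -, h3⟩; exact ⟨h1, h3, hzv⟩
      omega
    · rw [if_neg hzv]
      refine sum_eq_zero fun t _ => if_neg ?_
      rintro ⟨-, -, h3⟩
      exact hzv h3

/-! ### Aggregate counts and recurrences -/

def AA (n h : ℕ) : ℕ :=
  ∑ σ : Equiv.Perm (Fin n), if a3F σ = 0 ∧ znum σ = h then 1 else 0

def CC (n h : ℕ) : ℕ :=
  ∑ σ : Equiv.Perm (Fin n), if a3F σ = 1 ∧ znum σ = h then 1 else 0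

def DD (n h v : ℕ) : ℕ :=
  ∑ σ : Equiv.Perm (Fin n), if a3F σ = 0 ∧ znum σ = h then mult σ v else 0

def Dt (n v : ℕ) : ℕ :=
  ∑ σ : Equiv.Perm (Fin n), if a3F σ = 0 then mult σ v else 0

lemma sum_ite_and_eq (s : Finset ℕ) (c : Prop) [Decidable c] (x : ℕ) (F : ℕ → ℕ) :
    (∑ h ∈ s, if c ∧ x = h then F h else 0) = if c ∧ x ∈ s then F x else 0 := by
  by_cases hc : c
  · simp only [hc, true_and]
    exact Finset.sum_ite_eq s x F
  · simp [hc]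

lemma count_above_z (σ : Equiv.Perm (Fin n)) (j : ℕ) :
    (∑ W ∈ range (n + 1), if cov σ W = 0 ∧ zab σ W = j then 1 else 0)
      = if j < znum σ then 1 else 0 :=
  count_above (fun u => cov σ u = 0) (n + 1) j

lemma mult_eq_sum (σ : Equiv.Perm (Fin n)) (v : ℕ) :
    mult σ v = ∑ u ∈ range (n + 1), if cov σ u = 1 ∧ zab σ u = v then 1 else 0 := by
  unfold mult cnt
  exact sum_congr rfl fun u _ => if_congr (and_iff_left (Nat.zero_le u)) rfl rfl

/-- condition translation for type-A transitions -/
lemma cond_app_zero (σ : Equiv.Perm (Fin n)) (w : Fin (n + 1)) (j : ℕ) :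
    (a3F (app σ w) = 0 ∧ znum (app σ w) = j + 2)
      ↔ (a3F σ = 0 ∧ cov σ (w : ℕ) = 0 ∧ zab σ (w : ℕ) = j) := by
  have ha := a3F_app σ w
  have hz := znum_app σ w
  constructor
  · rintro ⟨h1, h2⟩
    have ha3 : a3F σ = 0 := by omega
    have hcov : cov σ (w : ℕ) = 0 := by omega
    have hstep : zge σ (w : ℕ) = zge σ ((w : ℕ) + 1) + 1 :=
      zge_succ_of_cov_eq_zero σ (by have := w.isLt; omega) hcov
    have : zab σ (w : ℕ) = zge σ ((w : ℕ) + 1) := rfl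
    refine ⟨ha3, hcov, by omega⟩
  · rintro ⟨h1, h2, h3⟩
    have hstep : zge σ (w : ℕ) = zge σ ((w : ℕ) + 1) + 1 :=
      zge_succ_of_cov_eq_zero σ (by have := w.isLt; omega) h2
    have hzab : zab σ (w : ℕ) = zge σ ((w : ℕ) + 1) := rfl
    exact ⟨by omega, by omega⟩

lemma sum_ite_const {α : Type*} (s : Finset α) (P : α → Prop) [DecidablePred P] (c : ℕ) :
    (∑ x ∈ s, if P x then c else 0) = c * ∑ x ∈ s, if P x then 1 else 0 := by
  rw [mul_sum]
  exact sum_congr rfl fun x _ => by split_ifs <;> simp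

/-- inner `w`-sum for type-A transitions carrying a weight depending only on `σ` -/
lemma inner_sum_A (σ : Equiv.Perm (Fin n)) (j c : ℕ) :
    (∑ w : Fin (n + 1),
      if a3F σ = 0 ∧ cov σ (w : ℕ) = 0 ∧ zab σ (w : ℕ) = j then c else 0)
      = if a3F σ = 0 ∧ j < znum σ then c else 0 := by
  rw [Fin.sum_univ_eq_sum_range
    (fun W => if a3F σ = 0 ∧ cov σ W = 0 ∧ zab σ W = j then c else 0)]
  by_cases ha : a3F σ = 0
  · simp only [ha, true_and]
    rw [sum_ite_const (range (n + 1)) (fun W => cov σ W = 0 ∧ zab σ W = j) c,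
      count_above_z σ j]
    split_ifs <;> simp
  · simp [ha]

/-- Recurrence for `AA`. -/
lemma AA_rec (n j : ℕ) :
    AA (n + 1) (j + 2) = ∑ h ∈ Icc (j + 1) (n + 1), AA n h := by
  unfold AA
  rw [sum_app (fun π => if a3F π = 0 ∧ znum π = j + 2 then 1 else 0)]
  have hL : ∀ σ : Equiv.Perm (Fin n),
      (∑ w : Fin (n + 1), if a3F (app σ w) = 0 ∧ znum (app σ w) = j + 2 then 1 else 0)
        = if a3F σ = 0 ∧ j < znum σ then 1 else 0 := by
    intro σ
    rw [← inner_sum_A σ j 1]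
    exact sum_congr rfl fun w _ => if_congr (cond_app_zero σ w j) rfl rfl
  rw [sum_congr rfl fun σ _ => hL σ, sum_comm]
  refine sum_congr rfl fun σ _ => ?_
  rw [sum_ite_and_eq (Icc (j + 1) (n + 1)) (a3F σ = 0) (znum σ) (fun _ => 1)]
  refine if_congr ?_ rfl rfl
  rw [mem_Icc]
  have := znum_le σ
  constructor
  · rintro ⟨h1, h2⟩; exact ⟨h1, by omega, by omega⟩
  · rintro ⟨h1, h2, h3⟩; exact ⟨h1, by omega⟩

/-- condition translation for type-C transitions (new a3-pair created) -/
lemma cond_app_one (σ : Equiv.Perm (Fin n)) (w : Fin (n + 1)) (j : ℕ) :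
    (a3F (app σ w) = 1 ∧ znum (app σ w) = j + 2)
      ↔ ((a3F σ = 1 ∧ cov σ (w : ℕ) = 0 ∧ zab σ (w : ℕ) = j)
          ∨ (a3F σ = 0 ∧ cov σ (w : ℕ) = 1 ∧ zab σ (w : ℕ) = j + 1)) := by
  have ha := a3F_app σ w
  have hz := znum_app σ w
  have hwn : (w : ℕ) ≤ n := by have := w.isLt; omega
  constructor
  · rintro ⟨h1, h2⟩
    rcases (by omega : (a3F σ = 1 ∧ cov σ (w : ℕ) = 0) ∨ (a3F σ = 0 ∧ cov σ (w:ℕ) = 1))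
      with ⟨ha3, hcov⟩ | ⟨ha3, hcov⟩
    · left
      have hstep : zge σ (w : ℕ) = zge σ ((w : ℕ) + 1) + 1 :=
        zge_succ_of_cov_eq_zero σ hwn hcov
      have hzab : zab σ (w : ℕ) = zge σ ((w : ℕ) + 1) := rfl
      exact ⟨ha3, hcov, by omega⟩
    · right
      have hstep : zge σ (w : ℕ) = zge σ ((w : ℕ) + 1) :=
        zge_succ_of_cov_ne_zero σ (by omega)
      have hzab : zab σ (w : ℕ) = zge σ ((w : ℕ) + 1) := rfl
      exact ⟨ha3, hcov, by omega⟩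
  · rintro (⟨ha3, hcov, hzab⟩ | ⟨ha3, hcov, hzab⟩)
    · have hstep : zge σ (w : ℕ) = zge σ ((w : ℕ) + 1) + 1 :=
        zge_succ_of_cov_eq_zero σ hwn hcov
      have hzab' : zab σ (w : ℕ) = zge σ ((w : ℕ) + 1) := rfl
      exact ⟨by omega, by omega⟩
    · have hstep : zge σ (w : ℕ) = zge σ ((w : ℕ) + 1) :=
        zge_succ_of_cov_ne_zero σ (by omega)
      have hzab' : zab σ (w : ℕ) = zge σ ((w : ℕ) + 1) := rfl
      exact ⟨by omega, by omega⟩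

/-- Recurrence for `CC`. -/
lemma CC_rec (n j : ℕ) :
    CC (n + 1) (j + 2) = (∑ h ∈ Icc (j + 1) (n + 1), CC n h) + Dt n (j + 1) := by
  unfold CC
  rw [sum_app (fun π => if a3F π = 1 ∧ znum π = j + 2 then 1 else 0)]
  have hL : ∀ σ : Equiv.Perm (Fin n),
      (∑ w : Fin (n + 1), if a3F (app σ w) = 1 ∧ znum (app σ w) = j + 2 then 1 else 0)
        = (if a3F σ = 1 ∧ j < znum σ then 1 else 0)
          + (if a3F σ = 0 then mult σ (j + 1) else 0) := by
    intro σ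
    have hsplit : ∀ w : Fin (n + 1),
        (if a3F (app σ w) = 1 ∧ znum (app σ w) = j + 2 then (1:ℕ) else 0)
        = (if a3F σ = 1 ∧ cov σ (w : ℕ) = 0 ∧ zab σ (w : ℕ) = j then 1 else 0)
          + (if a3F σ = 0 ∧ cov σ (w : ℕ) = 1 ∧ zab σ (w : ℕ) = j + 1 then 1 else 0) := by
      intro w
      rw [if_congr (cond_app_one σ w j) rfl rfl]
      by_cases h1 : a3F σ = 1 ∧ cov σ (w : ℕ) = 0 ∧ zab σ (w : ℕ) = j
      · rw [if_pos h1, if_pos (Or.inl h1), if_neg (by rintro ⟨h, -⟩; omega)]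
      · by_cases h2 : a3F σ = 0 ∧ cov σ (w : ℕ) = 1 ∧ zab σ (w : ℕ) = j + 1
        · rw [if_pos h2, if_neg h1, if_pos (Or.inr h2)]
        · rw [if_neg h1, if_neg h2, if_neg (by rintro (h | h); exact h1 h; exact h2 h)]
    rw [sum_congr rfl fun w _ => hsplit w, sum_add_distrib]
    congr 1
    · -- first piece: replay inner_sum_A with a3F σ = 1
      rw [Fin.sum_univ_eq_sum_range
        (fun W => if a3F σ = 1 ∧ cov σ W = 0 ∧ zab σ W = j then (1:ℕ) else 0)]
      by_cases ha : a3F σ = 1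
      · simp only [ha, true_and]
        rw [count_above_z σ j]
      · simp [ha]
    · rw [Fin.sum_univ_eq_sum_range
        (fun W => if a3F σ = 0 ∧ cov σ W = 1 ∧ zab σ W = j + 1 then (1:ℕ) else 0)]
      by_cases ha : a3F σ = 0
      · simp only [ha, true_and, if_true]
        exact (mult_eq_sum σ (j + 1)).symm
      · simp [ha]
  rw [sum_congr rfl fun σ _ => hL σ, sum_add_distrib]
  congr 1
  rw [sum_comm]
  refine sum_congr rfl fun σ _ => ?_
  rw [sum_ite_and_eq (Icc (j + 1) (n + 1)) (a3F σ = 1) (znum σ) (fun _ => 1)]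
  refine if_congr ?_ rfl rfl
  rw [mem_Icc]
  have := znum_le σ
  constructor
  · rintro ⟨h1, h2⟩; exact ⟨h1, by omega, by omega⟩
  · rintro ⟨h1, h2, h3⟩; exact ⟨h1, by omega⟩

/-- summand transformation for `DD`-recurrences -/
lemma mult_app_summand (σ : Equiv.Perm (Fin n)) (w : Fin (n + 1)) (j v : ℕ) :
    (if a3F (app σ w) = 0 ∧ znum (app σ w) = j + 2 then mult (app σ w) v else 0)
      = if a3F σ = 0 ∧ cov σ (w : ℕ) = 0 ∧ zab σ (w : ℕ) = j then
          ((if v = j + 1 then znum σ - (j + 1) else 0)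
            + (if v ≤ j then mult σ v else 0)) else 0 := by
  rw [if_congr (cond_app_zero σ w j) rfl rfl]
  by_cases hc : a3F σ = 0 ∧ cov σ (w : ℕ) = 0 ∧ zab σ (w : ℕ) = j
  · rw [if_pos hc, if_pos hc]
    obtain ⟨ha3, hcov, hzab⟩ := hc
    have hwn : (w : ℕ) ≤ n := by have := w.isLt; omega
    have hstep : zge σ (w : ℕ) = zge σ ((w : ℕ) + 1) + 1 :=
      zge_succ_of_cov_eq_zero σ hwn hcov
    have hzab' : zab σ (w : ℕ) = zge σ ((w : ℕ) + 1) := rfl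
    have hzge : zge σ (w : ℕ) = j + 1 := by omega
    have hzge1 : zge σ ((w : ℕ) + 1) = j := by omega
    rw [mult_app σ w v, mge_of_cov_zero σ v hcov, hzge, hzge1]
    have hpart := partitionZ σ (w : ℕ)
    rw [hzge1] at hpart
    by_cases hv1 : j + 1 = v
    · rw [if_pos hv1, if_pos hv1.symm, if_neg (show ¬ v ≤ j by omega)]
      omega
    · rw [if_neg hv1, if_neg (show ¬ v = j + 1 from fun h => hv1 h.symm), zero_add]
  · rw [if_neg hc, if_neg hc]

lemma DD_rec_top (n j : ℕ) :
    DD (n + 1) (j + 2) (j + 1) = ∑ h ∈ Icc (j + 1) (n + 1), (h - (j + 1)) * AA n h := by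
  unfold DD
  rw [sum_app (fun π => if a3F π = 0 ∧ znum π = j + 2 then mult π (j + 1) else 0)]
  have hL : ∀ σ : Equiv.Perm (Fin n),
      (∑ w : Fin (n + 1),
        if a3F (app σ w) = 0 ∧ znum (app σ w) = j + 2 then mult (app σ w) (j + 1) else 0)
        = if a3F σ = 0 ∧ j < znum σ then znum σ - (j + 1) else 0 := by
    intro σ
    have h1 : ∀ w : Fin (n + 1),
        (if a3F (app σ w) = 0 ∧ znum (app σ w) = j + 2 then mult (app σ w) (j + 1) else 0)
        = if a3F σ = 0 ∧ cov σ (w : ℕ) = 0 ∧ zab σ (w : ℕ) = j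
            then znum σ - (j + 1) else 0 := by
      intro w
      rw [mult_app_summand σ w j (j + 1)]
      refine if_congr Iff.rfl ?_ rfl
      rw [if_pos rfl, if_neg (show ¬ j + 1 ≤ j by omega), add_zero]
    rw [sum_congr rfl fun w _ => h1 w]
    exact inner_sum_A σ j (znum σ - (j + 1))
  rw [sum_congr rfl fun σ _ => hL σ]
  -- now regroup by the value of `znum`
  have hR : ∀ σ : Equiv.Perm (Fin n),
      (if a3F σ = 0 ∧ j < znum σ then znum σ - (j + 1) else 0)
        = ∑ h ∈ Icc (j + 1) (n + 1), if a3F σ = 0 ∧ znum σ = h then h - (j + 1) else 0 := by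
    intro σ
    rw [sum_ite_and_eq (Icc (j + 1) (n + 1)) (a3F σ = 0) (znum σ) (fun h => h - (j + 1))]
    refine (if_congr ?_ rfl rfl).symm
    rw [mem_Icc]
    have := znum_le σ
    constructor
    · rintro ⟨hh1, hh2, hh3⟩; exact ⟨hh1, by omega⟩
    · rintro ⟨hh1, hh2⟩; exact ⟨hh1, by omega, by omega⟩
  rw [sum_congr rfl fun σ _ => hR σ, sum_comm]
  refine sum_congr rfl fun h _ => ?_
  unfold AA
  rw [mul_sum]
  refine sum_congr rfl fun σ _ => ?_
  split_ifs <;> simp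

lemma DD_rec_low (n j v : ℕ) (hv : v ≤ j) :
    DD (n + 1) (j + 2) v = ∑ h ∈ Icc (j + 1) (n + 1), DD n h v := by
  unfold DD
  rw [sum_app (fun π => if a3F π = 0 ∧ znum π = j + 2 then mult π v else 0)]
  have hL : ∀ σ : Equiv.Perm (Fin n),
      (∑ w : Fin (n + 1),
        if a3F (app σ w) = 0 ∧ znum (app σ w) = j + 2 then mult (app σ w) v else 0)
        = if a3F σ = 0 ∧ j < znum σ then mult σ v else 0 := by
    intro σ
    have h1 : ∀ w : Fin (n + 1),
        (if a3F (app σ w) = 0 ∧ znum (app σ w) = j + 2 then mult (app σ w) v else 0)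
        = if a3F σ = 0 ∧ cov σ (w : ℕ) = 0 ∧ zab σ (w : ℕ) = j then mult σ v else 0 := by
      intro w
      rw [mult_app_summand σ w j v]
      refine if_congr Iff.rfl ?_ rfl
      rw [if_neg (show ¬ v = j + 1 by omega), if_pos hv, zero_add]
    rw [sum_congr rfl fun w _ => h1 w]
    exact inner_sum_A σ j (mult σ v)
  rw [sum_congr rfl fun σ _ => hL σ]
  have hR : ∀ σ : Equiv.Perm (Fin n),
      (if a3F σ = 0 ∧ j < znum σ then mult σ v else 0)
        = ∑ h ∈ Icc (j + 1) (n + 1), if a3F σ = 0 ∧ znum σ = h then mult σ v else 0 := by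
    intro σ
    rw [sum_ite_and_eq (Icc (j + 1) (n + 1)) (a3F σ = 0) (znum σ) (fun _ => mult σ v)]
    refine (if_congr ?_ rfl rfl).symm
    rw [mem_Icc]
    have := znum_le σ
    constructor
    · rintro ⟨hh1, hh2, hh3⟩; exact ⟨hh1, by omega⟩
    · rintro ⟨hh1, hh2⟩; exact ⟨hh1, by omega, by omega⟩
  rw [sum_congr rfl fun σ _ => hR σ, sum_comm]

/-! ### vanishing lemmas -/

lemma AA_vanish_big (n : ℕ) {h : ℕ} (hh : n + 1 < h) : AA n h = 0 := by
  unfold AA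
  refine sum_eq_zero fun σ _ => if_neg ?_
  rintro ⟨-, h2⟩
  have := znum_le σ
  omega

lemma AA_vanish_small (n : ℕ) (hn : 1 ≤ n) {h : ℕ} (hh : h ≤ 1) : AA n h = 0 := by
  unfold AA
  refine sum_eq_zero fun σ _ => if_neg ?_
  rintro ⟨-, h2⟩
  have := two_le_znum σ hn
  omega

lemma CC_vanish_big (n : ℕ) {h : ℕ} (hh : n + 1 < h) : CC n h = 0 := by
  unfold CC
  refine sum_eq_zero fun σ _ => if_neg ?_
  rintro ⟨-, h2⟩
  have := znum_le σ
  omega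

lemma DD_vanish_big (n : ℕ) {h v : ℕ} (hh : n + 1 < h) : DD n h v = 0 := by
  unfold DD
  refine sum_eq_zero fun σ _ => ?_
  rw [if_neg]
  rintro ⟨-, h2⟩
  have := znum_le σ
  omega

lemma DD_vanish_ge (n : ℕ) {h v : ℕ} (hv : h ≤ v) : DD n h v = 0 := by
  unfold DD
  refine sum_eq_zero fun σ _ => ?_
  by_cases hc : a3F σ = 0 ∧ znum σ = h
  · rw [if_pos hc, mult_eq_zero_of_ge σ (by omega)]
  · rw [if_neg hc]

lemma Dt_eq_sum (n v : ℕ) : Dt n v = ∑ h ∈ Icc 0 (n + 1), DD n h v := by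
  unfold Dt DD
  rw [sum_comm]
  refine sum_congr rfl fun σ _ => ?_
  have key : ∀ h, (if a3F σ = 0 ∧ znum σ = h then mult σ v else 0)
      = if a3F σ = 0 ∧ znum σ = h then (fun h => mult σ v) h else 0 := fun _ => rfl
  rw [sum_congr rfl fun h _ => key h,
    sum_ite_and_eq (Icc 0 (n + 1)) (a3F σ = 0) (znum σ) (fun _ => mult σ v)]
  refine if_congr ?_ rfl rfl
  rw [mem_Icc]
  have := znum_le σ
  constructor
  · rintro h1; exact ⟨h1, by omega, by omega⟩
  · rintro ⟨h1, -⟩; exact h1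

/-! ### base case `n = 0` -/

lemma a3F_zero (σ : Equiv.Perm (Fin 0)) : a3F σ = 0 := by
  unfold a3F
  simp

lemma cov_zero_perm (σ : Equiv.Perm (Fin 0)) (u : ℕ) : cov σ u = 0 := by
  unfold cov
  simp

lemma znum_zero_perm (σ : Equiv.Perm (Fin 0)) : znum σ = 1 := by
  unfold znum zge cnt
  simp [cov_zero_perm]

lemma mult_zero_perm (σ : Equiv.Perm (Fin 0)) (v : ℕ) : mult σ v = 0 := by
  unfold mult cnt
  refine sum_eq_zero fun u _ => if_neg ?_
  rintro ⟨⟨h1, -⟩, -⟩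
  rw [cov_zero_perm] at h1
  omega

lemma AA_base (h : ℕ) : AA 0 h = if h = 1 then 1 else 0 := by
  unfold AA
  have : ∀ σ : Equiv.Perm (Fin 0),
      (if a3F σ = 0 ∧ znum σ = h then (1:ℕ) else 0) = if h = 1 then 1 else 0 := by
    intro σ
    rw [a3F_zero, znum_zero_perm]
    refine if_congr ?_ rfl rfl
    omega
  rw [sum_congr rfl fun σ _ => this σ]
  rw [Finset.sum_const, Finset.card_univ]
  have hcard : Fintype.card (Equiv.Perm (Fin 0)) = 1 := by
    rw [Fintype.card_perm]
    simp
  rw [hcard, one_smul]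

lemma CC_base (h : ℕ) : CC 0 h = 0 := by
  unfold CC
  refine sum_eq_zero fun σ _ => if_neg ?_
  rintro ⟨h1, -⟩
  rw [a3F_zero] at h1
  omega

lemma DD_base (h v : ℕ) : DD 0 h v = 0 := by
  unfold DD
  refine sum_eq_zero fun σ _ => ?_
  rw [mult_zero_perm]
  split_ifs <;> rfl

lemma Dt_base (v : ℕ) : Dt 0 v = 0 := by
  unfold Dt
  refine sum_eq_zero fun σ _ => ?_
  rw [mult_zero_perm]
  split_ifs <;> rfl

/-! ### summation toolkit -/

/-- hockey stick for sums of `C(N - h, r)`, valid with truncated subtraction when `1 ≤ r`. -/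
lemma sum_choose_sub (N r : ℕ) (a : ℕ) :
    ∀ b, a ≤ b + 1 → (1 ≤ r ∨ b ≤ N) →
      (∑ h ∈ Icc a b, Nat.choose (N - h) r) + Nat.choose (N - b) (r + 1)
        = Nat.choose (N + 1 - a) (r + 1) := by
  intro b
  induction b with
  | zero =>
    intro hab _
    interval_cases a
    · rw [Finset.Icc_self, Finset.sum_singleton, Nat.sub_zero, Nat.sub_zero]
      have := Nat.choose_succ_succ' N r
      omega
    · rw [show Finset.Icc 1 0 = ∅ from rfl, Finset.sum_empty, zero_add]
      congr 1
  | succ b ih =>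
    intro hab hrb
    rcases Nat.lt_or_ge a (b + 2) with h | h
    · have hab' : a ≤ b + 1 := by omega
      rw [Finset.sum_Icc_succ_top hab']
      have ihb := ih hab' (by omega)
      have hstep : Nat.choose (N - (b + 1)) r + Nat.choose (N - (b + 1)) (r + 1)
          = Nat.choose (N - b) (r + 1) := by
        rcases Nat.lt_or_ge b N with hbN | hbN
        · have : N - b = (N - (b + 1)) + 1 := by omega
          rw [this, Nat.choose_succ_succ' (N - (b + 1)) r]
        · have hr : 1 ≤ r := by omega
          have h1 : N - b = 0 := by omega
          have h2 : N - (b + 1) = 0 := by omega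
          rw [h1, h2, Nat.choose_eq_zero_of_lt (by omega : 0 < r)]
          omega
      omega
    · have ha : a = b + 2 := by omega
      subst ha
      rw [show Finset.Icc (b + 2) (b + 1) = ∅ from Finset.Icc_eq_empty (by omega),
        Finset.sum_empty, zero_add]
      congr 1
      omega

/-- trim the zero part at the bottom of a sum over `Icc 0 b` -/
lemma sum_Icc_trim (f : ℕ → ℕ) (c b : ℕ) (hf : ∀ h, h < c → f h = 0) :
    ∑ h ∈ Icc 0 b, f h = ∑ h ∈ Icc c b, f h := by
  refine (Finset.sum_subset ?_ ?_).symm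
  · intro x hx
    rw [mem_Icc] at hx ⊢
    omega
  · intro x hx hx'
    rw [mem_Icc] at hx
    rw [mem_Icc] at hx'
    exact hf x (by omega)

/-- swap a linear weight into a double sum -/
lemma sum_weighted (f : ℕ → ℕ) (a : ℕ) :
    ∀ b, (∑ h ∈ Icc a b, (h - a) * f h) = ∑ t ∈ Icc (a + 1) b, ∑ h ∈ Icc t b, f h := by
  intro b
  induction b with
  | zero =>
    rcases Nat.eq_zero_or_pos a with rfl | ha
    · rw [Finset.Icc_self, Finset.sum_singleton,
        show Finset.Icc 1 0 = ∅ from rfl, Finset.sum_empty]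
      simp
    · rw [Finset.Icc_eq_empty (by omega), Finset.Icc_eq_empty (by omega),
        Finset.sum_empty, Finset.sum_empty]
  | succ b ih =>
    rcases Nat.lt_or_ge (b + 1) a with h | h
    · rw [Finset.Icc_eq_empty (by omega), Finset.Icc_eq_empty (by omega),
        Finset.sum_empty, Finset.sum_empty]
    · rcases Nat.lt_or_ge b a with hba | hba
      · -- a = b + 1
        have ha : a = b + 1 := by omega
        subst ha
        rw [Finset.Icc_self, Finset.sum_singleton, Finset.Icc_eq_empty (by omega),
          Finset.sum_empty, Nat.sub_self, zero_mul]
      -- a ≤ b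
      rw [Finset.sum_Icc_succ_top h, ih]
      rw [Finset.sum_Icc_succ_top (by omega : a + 1 ≤ b + 1)]
      have hinner : ∀ t ∈ Icc (a + 1) b,
          (∑ h ∈ Icc t (b + 1), f h) = (∑ h ∈ Icc t b, f h) + f (b + 1) := by
        intro t ht
        rw [mem_Icc] at ht
        exact Finset.sum_Icc_succ_top (by omega) f
      rw [sum_congr rfl hinner, sum_add_distrib, Finset.sum_const, Finset.Icc_self,
        Finset.sum_singleton]
      have hcard : #(Icc (a + 1) b) = b - a := by
        rw [Nat.card_Icc]
        omega
      rw [hcard, smul_eq_mul]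
      have hco : b + 1 - a = (b - a) + 1 := by omega
      rw [hco, add_mul, one_mul]
      omega

/-! ### base case n = 1 computations -/

lemma CC_vanish_small (n : ℕ) (hn : 1 ≤ n) {h : ℕ} (hh : h ≤ 1) : CC n h = 0 := by
  unfold CC
  refine sum_eq_zero fun σ _ => if_neg ?_
  rintro ⟨-, h2⟩
  have := two_le_znum σ hn
  omega

lemma AA_one (h : ℕ) : AA 1 h = if h = 2 then 1 else 0 := by
  rcases Nat.lt_or_ge h 2 with hh | hh
  · rw [AA_vanish_small 1 le_rfl (by omega), if_neg (by omega)]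
  · obtain ⟨j, rfl⟩ : ∃ j, h = j + 2 := ⟨h - 2, by omega⟩
    rw [AA_rec 0 j]
    rcases Nat.eq_zero_or_pos j with rfl | hj
    · rw [show (0:ℕ) + 1 = 1 from rfl, Finset.Icc_self, Finset.sum_singleton, AA_base,
        if_pos rfl, if_pos rfl]
    · rw [Finset.Icc_eq_empty (by omega), Finset.sum_empty, if_neg (by omega)]

lemma cov_one_perm (σ : Equiv.Perm (Fin 1)) (u : ℕ) : cov σ u = 0 := by
  unfold cov
  rw [card_eq_zero, filter_eq_empty_iff]
  rintro i - ⟨⟨k, hk, -⟩, -⟩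
  have h1 := i.isLt
  have h2 := k.isLt
  rw [Fin.lt_def] at hk
  omega

lemma DD_one (h v : ℕ) : DD 1 h v = 0 := by
  unfold DD
  refine sum_eq_zero fun σ _ => ?_
  have hm : mult σ v = 0 := by
    unfold mult cnt
    refine sum_eq_zero fun u _ => if_neg ?_
    rintro ⟨⟨h1, -⟩, -⟩
    rw [cov_one_perm] at h1
    omega
  rw [hm]
  split_ifs <;> rfl

lemma CC_one (h : ℕ) : CC 1 h = 0 := by
  rcases Nat.lt_or_ge h 2 with hh | hh
  · exact CC_vanish_small 1 le_rfl (by omega)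
  · obtain ⟨j, rfl⟩ : ∃ j, h = j + 2 := ⟨h - 2, by omega⟩
    rw [CC_rec 0 j, Dt_base]
    have : ∀ h' ∈ Icc (j + 1) (0 + 1), CC 0 h' = 0 := fun h' _ => CC_base h'
    rw [sum_congr rfl this, Finset.sum_const, smul_eq_mul, mul_zero]

/-! ### the closed forms, by induction -/

lemma closed_forms : ∀ n, 1 ≤ n →
    (∀ h, 1 ≤ h → h ≤ 2 * n →
      AA n h + (2 * n - h).choose n = (2 * n - h).choose (n - 1))
    ∧ (∀ h v, 1 ≤ v → v + 1 ≤ h →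
      DD n h v + (2 * n - h).choose (n + 1) = (2 * n - h).choose n)
    ∧ (∀ h, CC n h = (h - 1) * (2 * n - 1 - h).choose n) := by
  intro n hn
  induction n with
  | zero => omega
  | succ m ihm =>
    rcases Nat.eq_zero_or_pos m with rfl | hm
    · -- base case n = 1
      refine ⟨?_, ?_, ?_⟩
      · intro h h1 h2
        interval_cases h
        · rw [AA_one]
          norm_num
        · rw [AA_one]
          norm_num
      · intro h v hv1 hv2
        rw [DD_one, zero_add]
        have h0 : 2 * (0 + 1) - h = 0 := by omega
        rw [h0]
        rw [Nat.choose_eq_zero_of_lt (by omega), Nat.choose_eq_zero_of_lt (by omega)]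
      · intro h
        rw [CC_one]
        rcases Nat.lt_or_ge h 2 with hh | hh
        · have : h - 1 = 0 := by omega
          rw [this, zero_mul]
        · have : 2 * (0 + 1) - 1 - h = 0 := by omega
          rw [this, Nat.choose_eq_zero_of_lt (by omega), mul_zero]
    · -- induction step: n = m + 1 with hm : 1 ≤ m
      obtain ⟨IH1, IH2, IH3⟩ := ihm hm
      -- abbreviations
      set n := m  -- n is the previous level
      have hF1sum : ∀ a, 1 ≤ a → a ≤ n + 2 →
          (∑ h ∈ Icc a (n + 1), AA n h) + (2 * n + 1 - a).choose (n + 1)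
            = (2 * n + 1 - a).choose n := by
        intro a ha1 ha
        have key : ∀ h ∈ Icc a (n + 1),
            AA n h + (2 * n - h).choose n = (2 * n - h).choose (n - 1) := by
          intro h hh
          rw [mem_Icc] at hh
          exact IH1 h (by omega) (by omega)
        have hsum : (∑ h ∈ Icc a (n + 1), AA n h)
              + (∑ h ∈ Icc a (n + 1), (2 * n - h).choose n)
            = ∑ h ∈ Icc a (n + 1), (2 * n - h).choose (n - 1) := by
          rw [← sum_add_distrib]
          exact sum_congr rfl key
        have hS1 := sum_choose_sub (2 * n) n a (n + 1) (by omega) (Or.inl hm)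
        have hS2 := sum_choose_sub (2 * n) (n - 1) a (n + 1) (by omega) (Or.inr (by omega))
        rw [show n - 1 + 1 = n from by omega] at hS2
        have hz1 : (2 * n - (n + 1)).choose (n + 1) = 0 :=
          Nat.choose_eq_zero_of_lt (by omega)
        have hz2 : (2 * n - (n + 1)).choose n = 0 :=
          Nat.choose_eq_zero_of_lt (by omega)
        rw [hz1] at hS1
        rw [hz2] at hS2
        rw [show 2 * n + 1 - a = 2 * n + 1 - a from rfl]
        omega
      refine ⟨?_, ?_, ?_⟩
      · -- F1 at level n+1
        intro k hk1 hk2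
        rcases Nat.lt_or_ge k 2 with hk | hk
        · have hk1' : k = 1 := by omega
          subst hk1'
          rw [AA_vanish_small (n + 1) (by omega) le_rfl, zero_add]
          have hsymm := Nat.choose_symm (show n ≤ 2 * n + 1 by omega)
          rw [show 2 * n + 1 - n = n + 1 from by omega] at hsymm
          rw [show 2 * (n + 1) - 1 = 2 * n + 1 from by omega]
          rw [show n + 1 - 1 = n from by omega]
          exact hsymm
        rcases Nat.lt_or_ge (n + 2) k with hbig | hsm
        · rw [AA_vanish_big (n + 1) (by omega), zero_add,
            Nat.choose_eq_zero_of_lt (by omega), Nat.choose_eq_zero_of_lt (by omega)]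
        · obtain ⟨j, rfl⟩ : ∃ j, k = j + 2 := ⟨k - 2, by omega⟩
          rw [AA_rec n j]
          have := hF1sum (j + 1) (by omega) (by omega)
          rw [show 2 * (n + 1) - (j + 2) = 2 * n + 1 - (j + 1) from by omega,
            show n + 1 - 1 = n from by omega]
          omega
      · -- F2 at level n+1
        intro k v hv1 hv2
        rw [show n + 1 + 1 = n + 2 from rfl]
        rcases Nat.lt_or_ge (n + 2) k with hbig | hsm
        · rw [DD_vanish_big (n + 1) (by omega), zero_add,
            Nat.choose_eq_zero_of_lt (by omega), Nat.choose_eq_zero_of_lt (by omega)]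
        · obtain ⟨j, rfl⟩ : ∃ j, k = j + 2 := ⟨k - 2, by omega⟩
          rw [show 2 * (n + 1) - (j + 2) = 2 * n - j from by omega]
          rcases Nat.lt_or_ge v (j + 1) with hvlt | hvge
          · -- v ≤ j
            rw [DD_rec_low n j v (by omega)]
            have key : ∀ h ∈ Icc (j + 1) (n + 1),
                DD n h v + (2 * n - h).choose (n + 1) = (2 * n - h).choose n := by
              intro h hh
              rw [mem_Icc] at hh
              exact IH2 h v hv1 (by omega)
            have hsum : (∑ h ∈ Icc (j + 1) (n + 1), DD n h v)
                  + (∑ h ∈ Icc (j + 1) (n + 1), (2 * n - h).choose (n + 1))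
                = ∑ h ∈ Icc (j + 1) (n + 1), (2 * n - h).choose n := by
              rw [← sum_add_distrib]
              exact sum_congr rfl key
            have hS1 := sum_choose_sub (2 * n) (n + 1) (j + 1) (n + 1) (by omega)
              (Or.inl (by omega))
            have hS2 := sum_choose_sub (2 * n) n (j + 1) (n + 1) (by omega) (Or.inl hm)
            rw [show n + 1 + 1 = n + 2 from rfl] at hS1
            have hz1 : (2 * n - (n + 1)).choose (n + 2) = 0 :=
              Nat.choose_eq_zero_of_lt (by omega)
            have hz2 : (2 * n - (n + 1)).choose (n + 1) = 0 :=
              Nat.choose_eq_zero_of_lt (by omega)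
            rw [hz1, show 2 * n + 1 - (j + 1) = 2 * n - j from by omega] at hS1
            rw [hz2, show 2 * n + 1 - (j + 1) = 2 * n - j from by omega] at hS2
            omega
          · -- v = j + 1
            have hveq : v = j + 1 := by omega
            subst hveq
            rw [DD_rec_top n j]
            rw [sum_weighted (AA n) (j + 1) (n + 1), show j + 1 + 1 = j + 2 from rfl]
            have hT : ∀ t ∈ Icc (j + 2) (n + 1),
                (∑ h ∈ Icc t (n + 1), AA n h) + (2 * n + 1 - t).choose (n + 1)
                  = (2 * n + 1 - t).choose n := by
              intro t ht
              rw [mem_Icc] at ht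
              exact hF1sum t (by omega) (by omega)
            have hsum : (∑ t ∈ Icc (j + 2) (n + 1), ∑ h ∈ Icc t (n + 1), AA n h)
                  + (∑ t ∈ Icc (j + 2) (n + 1), (2 * n + 1 - t).choose (n + 1))
                = ∑ t ∈ Icc (j + 2) (n + 1), (2 * n + 1 - t).choose n := by
              rw [← sum_add_distrib]
              exact sum_congr rfl hT
            have hS1 := sum_choose_sub (2 * n + 1) (n + 1) (j + 2) (n + 1) (by omega)
              (Or.inl (by omega))
            have hS2 := sum_choose_sub (2 * n + 1) n (j + 2) (n + 1) (by omega)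
              (Or.inl hm)
            rw [show n + 1 + 1 = n + 2 from rfl] at hS1
            have hz1 : (2 * n + 1 - (n + 1)).choose (n + 2) = 0 :=
              Nat.choose_eq_zero_of_lt (by omega)
            have hz2 : (2 * n + 1 - (n + 1)).choose (n + 1) = 0 :=
              Nat.choose_eq_zero_of_lt (by omega)
            rw [hz1] at hS1
            rw [hz2] at hS2
            rw [show 2 * n + 1 + 1 - (j + 2) = 2 * n - j from by omega] at hS1 hS2
            omega
      · -- F3 at level n+1
        intro k
        rcases Nat.lt_or_ge k 2 with hk | hk
        · rw [CC_vanish_small (n + 1) (by omega) (by omega),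
            show k - 1 = 0 from by omega, zero_mul]
        rcases Nat.lt_or_ge (n + 2) k with hbig | hsm
        · rw [CC_vanish_big (n + 1) (by omega),
            Nat.choose_eq_zero_of_lt (by omega : 2 * (n + 1) - 1 - k < n + 1), mul_zero]
        · obtain ⟨j, rfl⟩ : ∃ j, k = j + 2 := ⟨k - 2, by omega⟩
          rw [CC_rec n j]
          -- the CC-sum
          have keyCC : ∀ h ∈ Icc (j + 1) (n + 1),
              CC n h = (h - (j + 1)) * (2 * n - 1 - h).choose n
                + j * (2 * n - 1 - h).choose n := by
            intro h hh
            rw [mem_Icc] at hh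
            rw [IH3 h, show h - 1 = (h - (j + 1)) + j from by omega, add_mul]
          have hsplit : (∑ h ∈ Icc (j + 1) (n + 1), CC n h)
              = (∑ h ∈ Icc (j + 1) (n + 1), (h - (j + 1)) * (2 * n - 1 - h).choose n)
                + j * ∑ h ∈ Icc (j + 1) (n + 1), (2 * n - 1 - h).choose n := by
            rw [mul_sum, ← sum_add_distrib]
            exact sum_congr rfl keyCC
          -- weighted part
          have hW : (∑ h ∈ Icc (j + 1) (n + 1), (h - (j + 1)) * (2 * n - 1 - h).choose n)
              = ∑ t ∈ Icc (j + 2) (n + 1), ∑ h ∈ Icc t (n + 1), (2 * n - 1 - h).choose n :=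
            sum_weighted _ (j + 1) (n + 1)
          have hG : ∀ t ∈ Icc (j + 2) (n + 1),
              (∑ h ∈ Icc t (n + 1), (2 * n - 1 - h).choose n) = (2 * n - t).choose (n + 1) := by
            intro t ht
            rw [mem_Icc] at ht
            have := sum_choose_sub (2 * n - 1) n t (n + 1) (by omega) (Or.inl hm)
            have hz : (2 * n - 1 - (n + 1)).choose (n + 1) = 0 :=
              Nat.choose_eq_zero_of_lt (by omega)
            rw [hz, show 2 * n - 1 + 1 - t = 2 * n - t from by omega] at this
            omega
          have hWsum : (∑ t ∈ Icc (j + 2) (n + 1), ∑ h ∈ Icc t (n + 1),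
                (2 * n - 1 - h).choose n)
              = (2 * n - 1 - j).choose (n + 2) := by
            rw [sum_congr rfl hG]
            have := sum_choose_sub (2 * n) (n + 1) (j + 2) (n + 1) (by omega)
              (Or.inl (by omega))
            rw [show n + 1 + 1 = n + 2 from rfl] at this
            have hz : (2 * n - (n + 1)).choose (n + 2) = 0 :=
              Nat.choose_eq_zero_of_lt (by omega)
            rw [hz, show 2 * n + 1 - (j + 2) = 2 * n - 1 - j from by omega] at this
            omega
          -- the plain g-sum
          have hgsum : (∑ h ∈ Icc (j + 1) (n + 1), (2 * n - 1 - h).choose n)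
              = (2 * n - 1 - j).choose (n + 1) := by
            have := sum_choose_sub (2 * n - 1) n (j + 1) (n + 1) (by omega) (Or.inl hm)
            have hz : (2 * n - 1 - (n + 1)).choose (n + 1) = 0 :=
              Nat.choose_eq_zero_of_lt (by omega)
            rw [hz, show 2 * n - 1 + 1 - (j + 1) = 2 * n - 1 - j from by omega] at this
            omega
          -- the Dt part
          have hDt : Dt n (j + 1) + (2 * n - 1 - j).choose (n + 2)
              = (2 * n - 1 - j).choose (n + 1) := by
            rw [Dt_eq_sum n (j + 1),
              sum_Icc_trim (fun h => DD n h (j + 1)) (j + 2) (n + 1)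
                (fun h hh => DD_vanish_ge n (by omega))]
            have key : ∀ h ∈ Icc (j + 2) (n + 1),
                DD n h (j + 1) + (2 * n - h).choose (n + 1) = (2 * n - h).choose n := by
              intro h hh
              rw [mem_Icc] at hh
              exact IH2 h (j + 1) (by omega) (by omega)
            have hsum : (∑ h ∈ Icc (j + 2) (n + 1), DD n h (j + 1))
                  + (∑ h ∈ Icc (j + 2) (n + 1), (2 * n - h).choose (n + 1))
                = ∑ h ∈ Icc (j + 2) (n + 1), (2 * n - h).choose n := by
              rw [← sum_add_distrib]
              exact sum_congr rfl key
            have hS1 := sum_choose_sub (2 * n) (n + 1) (j + 2) (n + 1) (by omega)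
              (Or.inl (by omega))
            have hS2 := sum_choose_sub (2 * n) n (j + 2) (n + 1) (by omega) (Or.inl hm)
            rw [show n + 1 + 1 = n + 2 from rfl] at hS1
            have hz1 : (2 * n - (n + 1)).choose (n + 2) = 0 :=
              Nat.choose_eq_zero_of_lt (by omega)
            have hz2 : (2 * n - (n + 1)).choose (n + 1) = 0 :=
              Nat.choose_eq_zero_of_lt (by omega)
            rw [hz1] at hS1
            rw [hz2] at hS2
            rw [show 2 * n + 1 - (j + 2) = 2 * n - 1 - j from by omega] at hS1 hS2
            omega
          -- assemble
          rw [hsplit, hW, hWsum, hgsum]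
          rw [show (j + 2 - 1) = j + 1 from by omega,
            show 2 * (n + 1) - 1 - (j + 2) = 2 * n - 1 - j from by omega, add_mul, one_mul]
          omega

/-! ### final assembly -/

lemma sum_CC (n : ℕ) :
    (∑ σ : Equiv.Perm (Fin n), if a3F σ = 1 then 1 else 0)
      = ∑ h ∈ Icc 0 (n + 1), CC n h := by
  unfold CC
  rw [sum_comm]
  refine sum_congr rfl fun σ _ => ?_
  rw [sum_ite_and_eq (Icc 0 (n + 1)) (a3F σ = 1) (znum σ) (fun _ => 1)]
  refine (if_congr ?_ rfl rfl).symm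
  rw [mem_Icc]
  have := znum_le σ
  constructor
  · rintro ⟨h1, -⟩; exact h1
  · rintro h1; exact ⟨h1, by omega, by omega⟩

lemma final_identity (n : ℕ) (hn : 1 ≤ n) :
    (∑ h ∈ Icc 0 (n + 1), (h - 1) * (2 * n - 1 - h).choose n)
      = (2 * n - 1).choose (n + 2) := by
  rw [sum_Icc_trim (fun h => (h - 1) * (2 * n - 1 - h).choose n) 2 (n + 1)
    (fun h hh => by
      show (h - 1) * (2 * n - 1 - h).choose n = 0
      rw [show h - 1 = 0 from by omega, zero_mul])]
  have hsplit : ∀ h ∈ Icc 2 (n + 1),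
      (h - 1) * (2 * n - 1 - h).choose n
        = (h - 2) * (2 * n - 1 - h).choose n + (2 * n - 1 - h).choose n := by
    intro h hh
    rw [mem_Icc] at hh
    rw [show h - 1 = (h - 2) + 1 from by omega, add_mul, one_mul]
  rw [sum_congr rfl hsplit, sum_add_distrib]
  rw [sum_weighted (fun h => (2 * n - 1 - h).choose n) 2 (n + 1),
    show (2 : ℕ) + 1 = 3 from rfl]
  have hG : ∀ t ∈ Icc 3 (n + 1),
      (∑ h ∈ Icc t (n + 1), (2 * n - 1 - h).choose n) = (2 * n - t).choose (n + 1) := by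
    intro t ht
    rw [mem_Icc] at ht
    have := sum_choose_sub (2 * n - 1) n t (n + 1) (by omega) (Or.inl hn)
    have hz : (2 * n - 1 - (n + 1)).choose (n + 1) = 0 :=
      Nat.choose_eq_zero_of_lt (by omega)
    rw [hz, show 2 * n - 1 + 1 - t = 2 * n - t from by omega] at this
    omega
  have hWsum : (∑ t ∈ Icc 3 (n + 1), ∑ h ∈ Icc t (n + 1), (2 * n - 1 - h).choose n)
      = (2 * n - 2).choose (n + 2) := by
    rw [sum_congr rfl hG]
    have := sum_choose_sub (2 * n) (n + 1) 3 (n + 1) (by omega) (Or.inl (by omega))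
    rw [show n + 1 + 1 = n + 2 from rfl] at this
    have hz : (2 * n - (n + 1)).choose (n + 2) = 0 :=
      Nat.choose_eq_zero_of_lt (by omega)
    rw [hz, show 2 * n + 1 - 3 = 2 * n - 2 from by omega] at this
    omega
  have hgsum : (∑ h ∈ Icc 2 (n + 1), (2 * n - 1 - h).choose n)
      = (2 * n - 2).choose (n + 1) := by
    have := sum_choose_sub (2 * n - 1) n 2 (n + 1) (by omega) (Or.inl hn)
    have hz : (2 * n - 1 - (n + 1)).choose (n + 1) = 0 :=
      Nat.choose_eq_zero_of_lt (by omega)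
    rw [hz, show 2 * n - 1 + 1 - 2 = 2 * n - 2 from by omega] at this
    omega
  rw [hWsum, hgsum]
  have hp := Nat.choose_succ_succ' (2 * n - 2) (n + 1)
  rw [show 2 * n - 2 + 1 = 2 * n - 1 from by omega,
    show n + 1 + 1 = n + 2 from rfl] at hp
  omega

end A3

lemma a3Count_eq_a3F (n : ℕ) (σ : Equiv.Perm (Fin n)) : a3Count n σ = A3.a3F σ := by
  classical
  unfold a3Count A3.a3F
  rw [Nat.card_eq_fintype_card, Fintype.card_subtype, Finset.card_filter,
    Fintype.sum_prod_type, Finset.sum_comm]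


theorem card_a3_eq_one (n : ℕ) (hn : 1 ≤ n) :
    Nat.card {π : Equiv.Perm (Fin n) // a3Count n π = 1} =
      genChoose (2 * n - 1) ((n : ℤ) - 3) := by
  classical
  have h1 : Nat.card {π : Equiv.Perm (Fin n) // a3Count n π = 1}
      = ∑ σ : Equiv.Perm (Fin n), if A3.a3F σ = 1 then 1 else 0 := by
    rw [Nat.card_eq_fintype_card, Fintype.card_subtype, Finset.card_filter]
    exact Finset.sum_congr rfl fun σ _ =>
      if_congr (by rw [a3Count_eq_a3F]) rfl rfl
  have h2 := A3.sum_CC n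
  have h3 : (∑ h ∈ Finset.Icc 0 (n + 1), A3.CC n h)
      = ∑ h ∈ Finset.Icc 0 (n + 1), (h - 1) * (2 * n - 1 - h).choose n :=
    Finset.sum_congr rfl fun h _ => ((A3.closed_forms n hn).2.2 h)
  have h4 := A3.final_identity n hn
  have hfinal : Nat.card {π : Equiv.Perm (Fin n) // a3Count n π = 1}
      = (2 * n - 1).choose (n + 2) := by
    rw [h1, h2, h3, h4]
  rw [hfinal]
  unfold genChoose
  rcases Nat.lt_or_ge n 3 with hn3 | hn3
  · rw [if_neg (by omega : ¬ (0 : ℤ) ≤ (n : ℤ) - 3)]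
    exact Nat.choose_eq_zero_of_lt (by omega)
  · rw [if_pos (by omega : (0 : ℤ) ≤ (n : ℤ) - 3)]
    have ht : ((n : ℤ) - 3).toNat = n - 3 := by omega
    rw [ht]
    have hs := Nat.choose_symm (show n + 2 ≤ 2 * n - 1 by omega)
    rw [show 2 * n - 1 - (n + 2) = n - 3 from by omega] at hs
    exact hs.symm
end

section
/- For every n ≥ 1, the total number, summed over all Dyck paths of length 2n, of tunnels of positive height and length at least 4 equals the binomial coefficient C(2n−1, n−3). -/
/-- The level of the lattice path `p` (a list of steps, `true` = up-step `(1,1)`,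
`false` = down-step `(1,-1)`) after its first `k` steps. -/
def lvl (p : List Bool) (k : ℕ) : ℤ :=
  ((p.take k).count true : ℤ) - ((p.take k).count false : ℤ)

/-- `p` is a Dyck path of length `2 * n`: it has `2 * n` steps, ends at level `0`,
and never goes below the x-axis. -/
def IsDyck (n : ℕ) (p : List Bool) : Prop :=
  p.length = 2 * n ∧ lvl p (2 * n) = 0 ∧ ∀ k, k ≤ 2 * n → 0 ≤ lvl p k

/-- `(i, j)` is a tunnel of `p`: step `i` is an up-step, step `j` is the matching
down-step, i.e. the first step after `i` whose endpoint returns to the level at which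
step `i` starts (so the path stays strictly above that level in between).
The height of this tunnel is `lvl p i` and its length is `j + 1 - i`. -/
def IsTunnel (p : List Bool) (i j : ℕ) : Prop :=
  i < j ∧ j < p.length ∧ p.getD i false = true ∧ p.getD j true = false ∧
    lvl p (j + 1) = lvl p i ∧ ∀ k, i < k → k ≤ j → lvl p i < lvl p k

namespace TP

theorem lvl_zero (p : List Bool) : lvl p 0 = 0 := by simp [lvl]

theorem lvl_succ (p : List Bool) (k : ℕ) (hk : k < p.length) :
    lvl p (k + 1) = lvl p k + (if p.getD k false = true then 1 else -1) := by
  have h1 : p.take (k+1) = p.take k ++ [p[k]] := by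
    rw [List.take_succ, List.getElem?_eq_getElem hk]; rfl
  have h2 : p.getD k false = p[k] := List.getD_eq_getElem p false hk
  rw [h2]
  rcases Bool.eq_false_or_eq_true p[k] with hb | hb <;>
    simp only [lvl, h1, List.count_append, hb] <;> simp <;> push_cast <;> ring

theorem lvl_stable (p : List Bool) (k : ℕ) (hk : p.length ≤ k) :
    lvl p k = lvl p p.length := by
  simp [lvl, List.take_of_length_le hk, List.take_length]

theorem lvl_succ_up (p : List Bool) (k : ℕ) (hk : k < p.length)
    (h : p.getD k false = true) : lvl p (k + 1) = lvl p k + 1 := by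
  rw [lvl_succ p k hk, h]; simp

theorem lvl_succ_down (p : List Bool) (k : ℕ) (hk : k < p.length)
    (h : p.getD k false = false) : lvl p (k + 1) = lvl p k - 1 := by
  rw [lvl_succ p k hk, h]; simp; ring

theorem lvl_succ_le (p : List Bool) (k : ℕ) : lvl p (k + 1) ≤ lvl p k + 1 := by
  rcases lt_or_ge k p.length with hk | hk
  · rw [lvl_succ p k hk]; split <;> omega
  · rw [lvl_stable p (k+1) (by omega), lvl_stable p k hk]; omega

theorem lvl_succ_ge (p : List Bool) (k : ℕ) : lvl p k - 1 ≤ lvl p (k + 1) := by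
  rcases lt_or_ge k p.length with hk | hk
  · rw [lvl_succ p k hk]; split <;> omega
  · rw [lvl_stable p (k+1) (by omega), lvl_stable p k hk]; omega

theorem up_of_lvl (p : List Bool) (k : ℕ) (hk : k < p.length)
    (h : lvl p k < lvl p (k + 1)) : p.getD k false = true := by
  by_contra hb
  have hf : p.getD k false = false := by
    rcases Bool.eq_false_or_eq_true (p.getD k false) with h' | h' <;> simp_all
  have := lvl_succ_down p k hk hf; omega

theorem down_of_lvl (p : List Bool) (k : ℕ) (hk : k < p.length)
    (h : lvl p (k + 1) < lvl p k) : p.getD k false = false := by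
  by_contra hb
  have ht : p.getD k false = true := by
    rcases Bool.eq_false_or_eq_true (p.getD k false) with h' | h' <;> simp_all
  have := lvl_succ_up p k hk ht; omega

theorem lvl_drop (p : List Bool) (m k : ℕ) :
    lvl p (m + k) = lvl p m + lvl (p.drop m) k := by
  have h : p.take (m + k) = p.take m ++ (p.drop m).take k := List.take_add
  simp only [lvl, h, List.count_append]
  push_cast; ring

theorem lvl_take (p : List Bool) (m k : ℕ) (h : k ≤ m) :
    lvl (p.take m) k = lvl p k := by
  simp [lvl, List.take_take, Nat.min_eq_left h]

theorem lvl_append (X Y : List Bool) (k : ℕ) :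
    lvl (X ++ Y) (X.length + k) = lvl X X.length + lvl Y k := by
  rw [lvl_drop (X ++ Y) X.length k, List.drop_left]
  congr 1
  simp [lvl, List.take_left]

theorem lvl_append_left (X Y : List Bool) (k : ℕ) (h : k ≤ X.length) :
    lvl (X ++ Y) k = lvl X k := by
  simp [lvl, List.take_append_of_le_length h]

theorem lvl_cons_succ (b : Bool) (l : List Bool) (k : ℕ) :
    lvl (b :: l) (k + 1) = (if b = true then 1 else -1) + lvl l k := by
  have h : (b :: l) = [b] ++ l := rfl
  rw [h]
  have h2 := lvl_append [b] l k
  simp only [List.length_singleton] at h2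
  rw [Nat.add_comm 1 k] at h2
  rw [h2]
  rcases Bool.eq_false_or_eq_true b with hb | hb <;> subst hb <;> simp [lvl] <;> ring

/-- Discrete downward intermediate value theorem for `lvl`. -/
theorem lvl_ivt (p : List Bool) (a b : ℕ) (hab : a ≤ b) (c : ℤ)
    (ha : c ≤ lvl p a) (hb : lvl p b ≤ c) :
    ∃ k, a ≤ k ∧ k ≤ b ∧ lvl p k = c := by
  classical
  have hPa : (fun k => a ≤ k ∧ c ≤ lvl p k) a := ⟨le_refl a, ha⟩
  have htb : Nat.findGreatest (fun k => a ≤ k ∧ c ≤ lvl p k) b ≤ b :=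
    Nat.findGreatest_le (P := fun k => a ≤ k ∧ c ≤ lvl p k) b
  have hPt := Nat.findGreatest_spec (P := fun k => a ≤ k ∧ c ≤ lvl p k) hab hPa
  rcases eq_or_lt_of_le htb with h | h
  · exact ⟨_, hPt.1, htb, le_antisymm (by rw [h]; exact hb) hPt.2⟩
  · have hnot : ¬ (fun k => a ≤ k ∧ c ≤ lvl p k) (Nat.findGreatest (fun k => a ≤ k ∧ c ≤ lvl p k) b + 1) :=
      Nat.findGreatest_is_greatest (P := fun k => a ≤ k ∧ c ≤ lvl p k) (Nat.lt_succ_self _) (by omega)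
    simp only at hnot hPt hPa
    have h1 : lvl p (Nat.findGreatest (fun k => a ≤ k ∧ c ≤ lvl p k) b + 1) < c := by
      by_contra hc
      exact hnot ⟨by omega, by omega⟩
    have h2 := lvl_succ_ge p (Nat.findGreatest (fun k => a ≤ k ∧ c ≤ lvl p k) b)
    exact ⟨_, hPt.1, htb, by omega⟩

theorem count_add_count (l : List Bool) :
    l.count true + l.count false = l.length := by
  induction l with
  | nil => simp
  | cons b t ih =>
    cases b <;> simp [List.count_cons] <;> omega

theorem lvl_map_not (w : List Bool) (k : ℕ) : lvl (w.map not) k = - lvl w k := by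
  simp only [lvl, ← List.map_take]
  have h1 : ∀ l : List Bool, (l.map not).count true = l.count false := by
    intro l; induction l with
    | nil => simp
    | cons b t ih => cases b <;> simp [List.count_cons, ih]
  have h2 : ∀ l : List Bool, (l.map not).count false = l.count true := by
    intro l; induction l with
    | nil => simp
    | cons b t ih => cases b <;> simp [List.count_cons, ih]
  rw [h1, h2]; ring

end TP
namespace TP

def Marked (n : ℕ) (p : List Bool) (i : ℕ) : Prop :=
  IsDyck n p ∧ i + 1 < 2 * n ∧ p.getD i false = true ∧ p.getD (i+1) false = true ∧
    0 < lvl p i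

open Classical in
noncomputable def matchJ (p : List Bool) (i : ℕ) : ℕ :=
  if h : ∃ k, i < k ∧ lvl p k = lvl p i then Nat.find h - 1 else 0

theorem marked_of_tunnel {n : ℕ} {p : List Bool} {i j : ℕ} (hd : IsDyck n p)
    (ht : IsTunnel p i j) (hh : 0 < lvl p i) (hl : 4 ≤ j + 1 - i) :
    Marked n p i := by
  obtain ⟨hij, hjlen, hgi, hgj, hlv, hstrict⟩ := ht
  have hlen : p.length = 2 * n := hd.1
  have hj3 : i + 3 ≤ j := by omega
  have hi1 : i + 1 < 2 * n := by omega
  refine ⟨hd, hi1, hgi, ?_, hh⟩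
  by_contra hb
  have hf : p.getD (i+1) false = false := by
    rcases Bool.eq_false_or_eq_true (p.getD (i+1) false) with h' | h' <;> simp_all
  have h1 : lvl p (i+1) = lvl p i + 1 := lvl_succ_up p i (by omega) hgi
  have h2 : lvl p (i+2) = lvl p (i+1) - 1 := by
    have := lvl_succ_down p (i+1) (by omega) hf
    have e : i + 1 + 1 = i + 2 := by omega
    rwa [e] at this
  have h3 := hstrict (i+2) (by omega) (by omega)
  omega

theorem matchJ_eq {p : List Bool} {i j : ℕ} (ht : IsTunnel p i j) :
    matchJ p i = j := by
  classical
  obtain ⟨hij, hjlen, hgi, hgj, hlv, hstrict⟩ := ht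
  have hex : ∃ k, i < k ∧ lvl p k = lvl p i := ⟨j + 1, by omega, hlv⟩
  rw [matchJ, dif_pos hex]
  have : Nat.find hex = j + 1 := by
    rw [Nat.find_eq_iff]
    refine ⟨⟨by omega, hlv⟩, ?_⟩
    intro k hk
    rintro ⟨hk1, hk2⟩
    have := hstrict k hk1 (by omega)
    omega
  omega

theorem tunnel_matchJ {n : ℕ} {p : List Bool} {i : ℕ} (hm : Marked n p i) :
    IsTunnel p i (matchJ p i) ∧ 4 ≤ matchJ p i + 1 - i := by
  classical
  obtain ⟨hd, hi1, hgi, hgi1, hh⟩ := hm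
  have hlen : p.length = 2 * n := hd.1
  have h1 : lvl p (i+1) = lvl p i + 1 := lvl_succ_up p i (by omega) hgi
  have h2 : lvl p (i+2) = lvl p (i+1) + 1 := by
    have := lvl_succ_up p (i+1) (by omega) hgi1
    have e : i + 1 + 1 = i + 2 := by omega
    rwa [e] at this
  have hex : ∃ k, i < k ∧ lvl p k = lvl p i := by
    obtain ⟨k, hk1, hk2, hk3⟩ :=
      lvl_ivt p (i+1) (2*n) (by omega) (lvl p i) (by omega)
        (by rw [hd.2.1]; omega)
    exact ⟨k, by omega, hk3⟩
  rw [matchJ, dif_pos hex]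
  obtain ⟨him, hlm⟩ := Nat.find_spec hex
  have hmin : ∀ k, k < Nat.find hex → ¬(i < k ∧ lvl p k = lvl p i) :=
    fun k hk => Nat.find_min hex hk
  have hm2n : Nat.find hex ≤ 2 * n := by
    obtain ⟨k, hk1, hk2, hk3⟩ :=
      lvl_ivt p (i+1) (2*n) (by omega) (lvl p i) (by omega)
        (by rw [hd.2.1]; omega)
    exact le_trans (Nat.find_min' hex (m := k) ⟨by omega, hk3⟩) hk2
  set m := Nat.find hex with hmdef
  have hgt : ∀ k, i < k → k < m → lvl p i < lvl p k := by
    intro k hik hkm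
    by_contra hle
    push_neg at hle
    have hne : lvl p k ≠ lvl p i := fun e => hmin k hkm ⟨hik, e⟩
    have hlt : lvl p k < lvl p i := lt_of_le_of_ne hle hne
    obtain ⟨k', hk1, hk2, hk3⟩ :=
      lvl_ivt p (i+1) k (by omega) (lvl p i) (by omega) (by omega)
    exact hmin k' (by omega) ⟨by omega, hk3⟩
  have hne1 : m ≠ i + 1 := by intro e; rw [e] at hlm; omega
  have hne2 : m ≠ i + 2 := by intro e; rw [e] at hlm; omega
  have h3 : lvl p (i+2) - 1 ≤ lvl p (i+3) := by
    have := lvl_succ_ge p (i+2)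
    have e : i + 2 + 1 = i + 3 := by omega
    rwa [e] at this
  have hne3 : m ≠ i + 3 := by intro e; rw [e] at hlm; omega
  have hm4 : i + 4 ≤ m := by omega
  have hjlen : m - 1 < p.length := by omega
  have hjgt : lvl p i < lvl p (m - 1) := hgt (m-1) (by omega) (by omega)
  have hlvm : lvl p (m - 1 + 1) = lvl p i := by
    have : m - 1 + 1 = m := by omega
    rw [this]; exact hlm
  have hdown : p.getD (m-1) false = false :=
    down_of_lvl p (m-1) hjlen (by omega)
  have hgd : p.getD (m-1) true = false := by
    rw [List.getD_eq_getElem _ _ hjlen]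
    rw [List.getD_eq_getElem _ _ hjlen] at hdown
    exact hdown
  refine ⟨⟨by omega, hjlen, hgi, hgd, hlvm, ?_⟩, by omega⟩
  intro k hk1 hk2
  exact hgt k hk1 (by omega)

/-- E1 : marked tunnels ≃ marked pairs. -/
noncomputable def equivMarked (n : ℕ) :
    {x : List Bool × ℕ × ℕ //
      IsDyck n x.1 ∧ IsTunnel x.1 x.2.1 x.2.2 ∧ 0 < lvl x.1 x.2.1 ∧
        4 ≤ x.2.2 + 1 - x.2.1} ≃ {y : List Bool × ℕ // Marked n y.1 y.2} where
  toFun x := ⟨(x.1.1, x.1.2.1), marked_of_tunnel x.2.1 x.2.2.1 x.2.2.2.1 x.2.2.2.2⟩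
  invFun y := ⟨(y.1.1, y.1.2, matchJ y.1.1 y.1.2),
    y.2.1, (tunnel_matchJ y.2).1, y.2.2.2.2.2, (tunnel_matchJ y.2).2⟩
  left_inv := by
    rintro ⟨⟨p, i, j⟩, h⟩
    have hj : matchJ p i = j := matchJ_eq h.2.1
    apply Subtype.ext
    simp only [hj]
  right_inv := by
    rintro ⟨⟨p, i⟩, h⟩
    rfl

end TP
namespace TP

def VCond (n : ℕ) (w : List Bool) : Prop :=
  w.length = 2 * n - 1 ∧ lvl w (2 * n - 1) = -1 ∧ ∃ k, k ≤ 2 * n - 1 ∧ lvl w k ≤ -3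

def cutIdx (w : List Bool) : ℕ :=
  Nat.findGreatest (fun k => ∀ k' ≤ w.length, lvl w k ≤ lvl w k') w.length

theorem cutIdx_le (w : List Bool) : cutIdx w ≤ w.length :=
  Nat.findGreatest_le (P := fun k => ∀ k' ≤ w.length, lvl w k ≤ lvl w k') w.length

theorem cutIdx_spec (w : List Bool) : ∀ k' ≤ w.length, lvl w (cutIdx w) ≤ lvl w k' := by
  obtain ⟨b, hb, hmin⟩ := Finset.exists_min_image (Finset.range (w.length + 1)) (lvl w)
    ⟨0, by simp⟩
  have hb' : b ≤ w.length := by simp at hb; omega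
  have hP : ∀ k' ≤ w.length, lvl w b ≤ lvl w k' := by
    intro k' hk'
    exact hmin k' (by simp; omega)
  exact Nat.findGreatest_spec (P := fun k => ∀ k' ≤ w.length, lvl w k ≤ lvl w k') hb' hP

theorem cutIdx_lt (w : List Bool) (k : ℕ) (h1 : cutIdx w < k) (h2 : k ≤ w.length) :
    lvl w (cutIdx w) < lvl w k := by
  have hnot := Nat.findGreatest_is_greatest
    (P := fun k => ∀ k' ≤ w.length, lvl w k ≤ lvl w k') h1 h2
  have hnot' : ¬ (∀ k' ≤ w.length, lvl w k ≤ lvl w k') := hnot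
  push_neg at hnot'
  obtain ⟨k', hk', hlt⟩ := hnot'
  exact lt_of_le_of_lt (cutIdx_spec w k' hk') hlt

def mark (y : List Bool × ℕ) : List Bool := y.1.drop (y.2 + 2) ++ true :: y.1.take y.2

def unmark (w : List Bool) : List Bool × ℕ :=
  (w.drop (cutIdx w + 1) ++ true :: true :: w.take (cutIdx w), w.length - cutIdx w - 1)

theorem mark_spec {n : ℕ} {p : List Bool} {i : ℕ} (hm : Marked n p i) :
    VCond n (mark (p, i)) ∧ unmark (mark (p, i)) = (p, i) := by
  obtain ⟨hd, hi1, hgi, hgi1, hh⟩ := hm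
  have hlen : p.length = 2 * n := hd.1
  set X := p.take i with hX
  set Z := p.drop (i + 2) with hZ
  have hw : mark (p, i) = Z ++ true :: X := rfl
  rw [hw]
  set w := Z ++ true :: X with hwdef
  have hZlen : Z.length = 2 * n - (i + 2) := by
    rw [hZ, List.length_drop, hlen]
  have hXlen : X.length = i := by
    rw [hX, List.length_take]; omega
  have hwlen : w.length = 2 * n - 1 := by
    simp [hwdef, hZlen, hXlen]; omega
  have hu1 : lvl p (i + 1) = lvl p i + 1 := lvl_succ_up p i (by omega) hgi
  have hu2 : lvl p (i + 2) = lvl p i + 2 := by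
    have := lvl_succ_up p (i + 1) (by omega) hgi1
    have e : i + 1 + 1 = i + 2 := by omega
    rw [e] at this; omega
  have F1 : ∀ k, k ≤ Z.length → lvl w k = lvl p (i + 2 + k) - lvl p (i + 2) := by
    intro k hk
    have h1 := lvl_append_left Z (true :: X) k hk
    have h2 := lvl_drop p (i + 2) k
    rw [← hwdef] at h1
    rw [← hZ] at h2
    omega
  have hZe : lvl Z Z.length = - lvl p i - 2 := by
    have h2 := lvl_drop p (i + 2) Z.length
    have e : i + 2 + Z.length = 2 * n := by omega
    rw [e, hd.2.1, ← hZ] at h2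
    omega
  have F2 : ∀ k, k ≤ i → lvl w (Z.length + (1 + k)) = - lvl p i - 1 + lvl p k := by
    intro k hk
    have h1 := lvl_append Z (true :: X) (1 + k)
    rw [← hwdef] at h1
    have h2 : lvl (true :: X) (1 + k) = 1 + lvl X k := by
      have := lvl_cons_succ true X k
      rw [Nat.add_comm k 1] at this
      simp at this
      omega
    have h3 : lvl X k = lvl p k := by
      rw [hX]; exact lvl_take p i k hk
    rw [h1, h2, h3, hZe]; ring
  have hcut : cutIdx w = Z.length := by
    rw [cutIdx, Nat.findGreatest_eq_iff]
    refine ⟨by omega, fun _ => ?_, ?_⟩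
    · intro k' hk'
      rcases le_or_gt k' Z.length with h | h
      · rw [F1 Z.length (le_refl _), F1 k' h]
        have e : i + 2 + Z.length = 2 * n := by omega
        rw [e, hd.2.1]
        have := hd.2.2 (i + 2 + k') (by omega)
        omega
      · have e : k' = Z.length + (1 + (k' - Z.length - 1)) := by omega
        rw [F1 Z.length (le_refl _), e, F2 (k' - Z.length - 1) (by omega)]
        have e2 : i + 2 + Z.length = 2 * n := by omega
        rw [e2, hd.2.1]
        have := hd.2.2 (k' - Z.length - 1) (by omega)
        omega
    · intro k hk1 hk2
      push_neg
      refine ⟨Z.length, by omega, ?_⟩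
      have e : k = Z.length + (1 + (k - Z.length - 1)) := by omega
      rw [F1 Z.length (le_refl _), e, F2 (k - Z.length - 1) (by omega)]
      have e2 : i + 2 + Z.length = 2 * n := by omega
      rw [e2, hd.2.1]
      have := hd.2.2 (k - Z.length - 1) (by omega)
      omega
  constructor
  · refine ⟨hwlen, ?_, ⟨Z.length, by omega, ?_⟩⟩
    · have e : 2 * n - 1 = Z.length + (1 + i) := by omega
      rw [e, F2 i (le_refl _)]
      omega
    · rw [F1 Z.length (le_refl _)]
      have e : i + 2 + Z.length = 2 * n := by omega
      rw [e, hd.2.1]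
      omega
  · have htake : w.take (cutIdx w) = Z := by
      rw [hcut, hwdef]; exact List.take_left' rfl
    have hdrop : w.drop (cutIdx w + 1) = X := by
      rw [hcut, hwdef]
      have e : Z ++ true :: X = (Z ++ [true]) ++ X := by simp
      rw [e]
      have e2 : Z.length + 1 = (Z ++ [true]).length := by simp
      rw [e2]
      exact List.drop_left
    have hrecon : X ++ true :: true :: Z = p := by
      have h1 : p.drop i = true :: true :: Z := by
        rw [List.drop_eq_getElem_cons (by omega : i < p.length)]
        have e1 : p[i] = true := by
          rw [← List.getD_eq_getElem p false (by omega : i < p.length)]; exact hgi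
        rw [e1]
        rw [List.drop_eq_getElem_cons (by omega : i + 1 < p.length)]
        have e2 : p[i+1] = true := by
          rw [← List.getD_eq_getElem p false (by omega : i + 1 < p.length)]; exact hgi1
        rw [e2, hZ]
      rw [← h1, hX, List.take_append_drop]
    rw [unmark, htake, hdrop, hrecon]
    have e3 : w.length - cutIdx w - 1 = i := by rw [hcut]; omega
    rw [e3]

theorem unmark_spec {n : ℕ} {w : List Bool} (hv : VCond n w) :
    Marked n (unmark w).1 (unmark w).2 ∧ mark (unmark w) = w := by
  obtain ⟨hwlen, hend, k0, hk0, hk0'⟩ := hv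
  have hspec := cutIdx_spec w
  have hlt' := cutIdx_lt w
  have htL := cutIdx_le w
  have hunm0 : unmark w =
      (w.drop (cutIdx w + 1) ++ true :: true :: w.take (cutIdx w),
        w.length - cutIdx w - 1) := rfl
  obtain ⟨t, ht⟩ : ∃ t, cutIdx w = t := ⟨_, rfl⟩
  rw [ht] at hspec htL hunm0
  have hlt : ∀ k, t < k → k ≤ w.length → lvl w t < lvl w k := by
    intro k h1 h2
    have := hlt' k (by rw [ht]; exact h1) h2
    rwa [ht] at this
  have hM3 : lvl w t ≤ -3 := le_trans (hspec k0 (by omega)) hk0'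
  have hend' : lvl w w.length = -1 := by rw [hwlen]; exact hend
  have htlt : t < w.length := by
    rcases eq_or_lt_of_le htL with h | h
    · rw [h] at hM3; omega
    · exact h
  have hup : lvl w (t + 1) = lvl w t + 1 := by
    have h1 := hlt (t + 1) (by omega) (by omega)
    have h2 := lvl_succ_le w t
    omega
  have hwt : w.getD t false = true := up_of_lvl w t htlt (by omega)
  set X := w.drop (t + 1) with hX
  set Z := w.take t with hZ
  set p := X ++ true :: true :: Z with hp
  set i := w.length - t - 1 with hi
  have hXlen : X.length = i := by rw [hX, List.length_drop]; omega
  have hZlen : Z.length = t := by rw [hZ, List.length_take]; omega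
  have hplen : p.length = 2 * n := by
    simp [hp, hXlen, hZlen]; omega
  have hunm : unmark w = (p, i) := hunm0
  have G1 : ∀ k, k ≤ i → lvl p k = lvl w (t + 1 + k) - lvl w t - 1 := by
    intro k hk
    have h1 := lvl_append_left X (true :: true :: Z) k (by omega)
    have h2 := lvl_drop w (t + 1) k
    rw [← hp] at h1
    rw [← hX] at h2
    omega
  have hpi : lvl p i = - lvl w t - 2 := by
    have h1 := G1 i (le_refl _)
    have e : t + 1 + i = w.length := by omega
    rw [e] at h1
    omega
  have hXfull : lvl X X.length = - lvl w t - 2 := by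
    have h1 := G1 i (le_refl _)
    have h2 := lvl_append_left X (true :: true :: Z) i (by omega)
    rw [← hp] at h2
    have e : t + 1 + i = w.length := by omega
    rw [e] at h1
    rw [hXlen]
    omega
  have G2 : ∀ k, k ≤ t → lvl p (i + 2 + k) = - lvl w t + lvl w k := by
    intro k hk
    have assoc : p = (X ++ [true, true]) ++ Z := by rw [hp]; simp
    have hlen2 : (X ++ [true, true]).length = i + 2 := by simp [hXlen]
    have h1 := lvl_append (X ++ [true, true]) Z k
    rw [← assoc, hlen2] at h1
    have h2 : lvl (X ++ [true, true]) (i + 2) = - lvl w t := by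
      have h3 := lvl_append X [true, true] 2
      rw [hXlen] at h3
      have h4 : lvl [true, true] 2 = 2 := by simp [lvl]
      rw [hXlen] at hXfull
      rw [h3, h4]
      omega
    have h5 : lvl Z k = lvl w k := by rw [hZ]; exact lvl_take w t k hk
    rw [h1, h2, h5]
  have hgi : p.getD i false = true := by
    rw [hp, List.getD_append_right X _ false i (by omega), hXlen]
    simp
  have hgi1 : p.getD (i + 1) false = true := by
    rw [hp, List.getD_append_right X _ false (i + 1) (by omega), hXlen]
    have e : i + 1 - i = 1 := by omega
    rw [e]
    simp
  have hu1 : lvl p (i + 1) = lvl p i + 1 := lvl_succ_up p i (by omega) hgi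
  have hdyck : IsDyck n p := by
    refine ⟨hplen, ?_, ?_⟩
    · have e : 2 * n = i + 2 + t := by omega
      rw [e, G2 t (le_refl _)]
      omega
    · intro k hk
      rcases le_or_gt k i with h | h
      · rw [G1 k h]
        have := hlt (t + 1 + k) (by omega) (by omega)
        omega
      · rcases le_or_gt k (i + 1) with h2 | h2
        · have e : k = i + 1 := by omega
          rw [e]
          omega
        · have e : k = i + 2 + (k - i - 2) := by omega
          rw [e, G2 (k - i - 2) (by omega)]
          have := hspec (k - i - 2) (by omega)
          omega
  constructor
  · rw [hunm]
    exact ⟨hdyck, by omega, hgi, hgi1, by rw [hpi]; omega⟩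
  · rw [hunm]
    have htake : p.take i = X := by
      rw [hp]; exact List.take_left' hXlen
    have hdrop : p.drop (i + 2) = Z := by
      have assoc : p = (X ++ [true, true]) ++ Z := by rw [hp]; simp
      rw [assoc]
      have e : (X ++ [true, true]).length = i + 2 := by simp [hXlen]
      exact List.drop_left' e
    have hm : mark (p, i) = Z ++ true :: X := by rw [mark, htake, hdrop]
    rw [hm]
    have hw1 : w = Z ++ w.drop t := by rw [hZ, List.take_append_drop]
    have hw2 : w.drop t = true :: X := by
      rw [List.drop_eq_getElem_cons htlt]
      have e : w[t] = true := by
        rw [← List.getD_eq_getElem w false htlt]; exact hwt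
      rw [e, hX]
    rw [hw1, hw2]

/-- E2 : marked pairs ≃ free paths ending at -1 with min ≤ -3. -/
noncomputable def equivCut (n : ℕ) :
    {y : List Bool × ℕ // Marked n y.1 y.2} ≃ {w : List Bool // VCond n w} where
  toFun y := ⟨mark y.1, by
    have := mark_spec (n := n) (p := y.1.1) (i := y.1.2) y.2
    exact this.1⟩
  invFun w := ⟨unmark w.1, (unmark_spec w.2).1⟩
  left_inv := by
    rintro ⟨⟨p, i⟩, h⟩
    apply Subtype.ext
    exact (mark_spec h).2
  right_inv := by
    rintro ⟨w, h⟩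
    apply Subtype.ext
    exact (unmark_spec h).2

end TP
namespace TP

def WCond (n : ℕ) (w : List Bool) : Prop :=
  w.length = 2 * n - 1 ∧ lvl w (2 * n - 1) = -5

open Classical in
noncomputable def hitIdx (w : List Bool) : ℕ :=
  if h : ∃ k, lvl w k = -3 then Nat.find h else 0

noncomputable def flip3 (w : List Bool) : List Bool :=
  w.take (hitIdx w) ++ (w.drop (hitIdx w)).map not

theorem flip3_length (w : List Bool) : (flip3 w).length = w.length := by
  simp [flip3]; omega

theorem flip3_spec (w : List Bool) (hex : ∃ k, lvl w k = -3) :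
    lvl w (hitIdx w) = -3 ∧ hitIdx w ≤ w.length ∧
    (∀ k, k ≤ hitIdx w → lvl (flip3 w) k = lvl w k) ∧
    (∀ k, lvl (flip3 w) (hitIdx w + k) = -6 - lvl w (hitIdx w + k)) ∧
    flip3 (flip3 w) = w := by
  classical
  have hτ : hitIdx w = Nat.find hex := by rw [hitIdx, dif_pos hex]
  have hhit : lvl w (hitIdx w) = -3 := by rw [hτ]; exact Nat.find_spec hex
  have hmin : ∀ k, k < hitIdx w → lvl w k ≠ -3 := by
    intro k hk
    rw [hτ] at hk
    exact Nat.find_min hex hk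
  have hle : hitIdx w ≤ w.length := by
    obtain ⟨k, hk⟩ := id hex
    rcases le_or_gt k w.length with h | h
    · rw [hτ]; exact le_trans (Nat.find_min' hex hk) h
    · have : lvl w w.length = -3 := by
        rw [← hk, lvl_stable w k (by omega)]
      rw [hτ]; exact Nat.find_min' hex this
  have htlen : (w.take (hitIdx w)).length = hitIdx w := by
    rw [List.length_take]; omega
  have A1 : ∀ k, k ≤ hitIdx w → lvl (flip3 w) k = lvl w k := by
    intro k hk
    rw [flip3, lvl_append_left _ _ k (by omega), lvl_take w (hitIdx w) k hk]
  have A2 : ∀ k, lvl (flip3 w) (hitIdx w + k) = -6 - lvl w (hitIdx w + k) := by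
    intro k
    have h1 := lvl_append (w.take (hitIdx w)) ((w.drop (hitIdx w)).map not) k
    rw [htlen] at h1
    rw [flip3, h1, lvl_take w (hitIdx w) (hitIdx w) (le_refl _), lvl_map_not]
    have h2 := lvl_drop w (hitIdx w) k
    omega
  refine ⟨hhit, hle, A1, A2, ?_⟩
  have hex2 : ∃ k, lvl (flip3 w) k = -3 := ⟨hitIdx w, by rw [A1 _ (le_refl _)]; exact hhit⟩
  have hτ2 : hitIdx (flip3 w) = hitIdx w := by
    rw [hitIdx, dif_pos hex2, Nat.find_eq_iff]
    constructor
    · rw [A1 _ (le_refl _)]; exact hhit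
    · intro k hk
      rw [A1 k (by omega)]
      exact hmin k hk
  rw [flip3, hτ2]
  have ht2 : (flip3 w).take (hitIdx w) = w.take (hitIdx w) := by
    rw [flip3]; exact List.take_left' htlen
  have hd2 : (flip3 w).drop (hitIdx w) = (w.drop (hitIdx w)).map not := by
    rw [flip3]; exact List.drop_left' htlen
  rw [ht2, hd2, List.map_map]
  have : (not ∘ not) = id := by funext b; simp
  rw [this, List.map_id, List.take_append_drop]

theorem vcond_hex {n : ℕ} {w : List Bool} (hv : VCond n w) : ∃ k, lvl w k = -3 := by
  obtain ⟨hlen, hend, k0, hk0, hk0'⟩ := hv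
  obtain ⟨k, _, _, hk⟩ := lvl_ivt w 0 k0 (by omega) (-3) (by rw [lvl_zero]; omega) hk0'
  exact ⟨k, hk⟩

theorem wcond_hex {n : ℕ} {w : List Bool} (hw : WCond n w) : ∃ k, lvl w k = -3 := by
  obtain ⟨hlen, hend⟩ := hw
  obtain ⟨k, _, _, hk⟩ := lvl_ivt w 0 (2 * n - 1) (by omega) (-3)
    (by rw [lvl_zero]; omega) (by omega)
  exact ⟨k, hk⟩

theorem flip_VW {n : ℕ} {w : List Bool} (hv : VCond n w) : WCond n (flip3 w) := by
  have hex := vcond_hex hv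
  obtain ⟨hhit, hle, A1, A2, hff⟩ := flip3_spec w hex
  obtain ⟨hlen, hend, k0, hk0, hk0'⟩ := hv
  refine ⟨by rw [flip3_length]; exact hlen, ?_⟩
  have e : 2 * n - 1 = hitIdx w + (2 * n - 1 - hitIdx w) := by omega
  rw [e, A2, ← e, hend]
  norm_num

theorem flip_WV {n : ℕ} {w : List Bool} (hw : WCond n w) : VCond n (flip3 w) := by
  have hex := wcond_hex hw
  obtain ⟨hhit, hle, A1, A2, hff⟩ := flip3_spec w hex
  obtain ⟨hlen, hend⟩ := hw
  refine ⟨by rw [flip3_length]; exact hlen, ?_, ⟨hitIdx w, by omega, ?_⟩⟩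
  · have e : 2 * n - 1 = hitIdx w + (2 * n - 1 - hitIdx w) := by omega
    rw [e, A2, ← e, hend]
    norm_num
  · rw [A1 _ (le_refl _), hhit]

/-- E3 : reflection. -/
noncomputable def equivFlip (n : ℕ) :
    {w : List Bool // VCond n w} ≃ {w : List Bool // WCond n w} where
  toFun w := ⟨flip3 w.1, flip_VW w.2⟩
  invFun w := ⟨flip3 w.1, flip_WV w.2⟩
  left_inv := by
    rintro ⟨w, h⟩
    apply Subtype.ext
    exact (flip3_spec w (vcond_hex h)).2.2.2.2
  right_inv := by
    rintro ⟨w, h⟩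
    apply Subtype.ext
    exact (flip3_spec w (wcond_hex h)).2.2.2.2

end TP
namespace TP

instance finite_llc (m k : ℕ) : Finite {l : List Bool // l.length = m ∧ l.count true = k} := by
  apply Finite.of_injective (β := Fin m → Bool) (f := fun x j => x.1.getD j false)
  rintro ⟨l1, h1, _⟩ ⟨l2, h2, _⟩ h
  apply Subtype.ext
  show l1 = l2
  apply List.ext_getElem (by omega)
  intro j hj1 hj2
  have h' : l1.getD j false = l2.getD j false := congrFun h ⟨j, by omega⟩
  rwa [List.getD_eq_getElem l1 false hj1, List.getD_eq_getElem l2 false hj2] at h'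

instance finite_llc' (m k : ℕ) : Finite {l : List Bool // l.length = m ∧ l.count true + 1 = k} := by
  apply Finite.of_injective (β := Fin m → Bool) (f := fun x j => x.1.getD j false)
  rintro ⟨l1, h1, _⟩ ⟨l2, h2, _⟩ h
  apply Subtype.ext
  show l1 = l2
  apply List.ext_getElem (by omega)
  intro j hj1 hj2
  have h' : l1.getD j false = l2.getD j false := congrFun h ⟨j, by omega⟩
  rwa [List.getD_eq_getElem l1 false hj1, List.getD_eq_getElem l2 false hj2] at h'

theorem card_count (m : ℕ) : ∀ k : ℕ,
    Nat.card {l : List Bool // l.length = m ∧ l.count true = k} = m.choose k := by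
  induction m with
  | zero =>
    intro k
    cases k with
    | zero =>
      haveI : Unique {l : List Bool // l.length = 0 ∧ l.count true = 0} := by
        refine ⟨⟨⟨[], by simp, by simp⟩⟩, ?_⟩
        rintro ⟨l, h, h'⟩
        apply Subtype.ext
        simpa using List.length_eq_zero_iff.mp h
      exact Nat.card_unique
    | succ k =>
      haveI : IsEmpty {l : List Bool // l.length = 0 ∧ l.count true = k + 1} := by
        refine ⟨?_⟩
        rintro ⟨l, h, h'⟩
        have : l.count true ≤ l.length := List.count_le_length
        omega
      rw [Nat.card_of_isEmpty]; simp
  | succ m ih =>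
    intro k
    have hbij : Function.Bijective
        (fun s : {l : List Bool // l.length = m ∧ l.count true = k} ⊕
          {l : List Bool // l.length = m ∧ l.count true + 1 = k} =>
          (Sum.elim
            (fun x : {l : List Bool // l.length = m ∧ l.count true = k} =>
              (⟨false :: x.1, by simp [x.2.1], by simp [List.count_cons, x.2.2]⟩ :
                {l : List Bool // l.length = m + 1 ∧ l.count true = k}))
            (fun x : {l : List Bool // l.length = m ∧ l.count true + 1 = k} =>
              ⟨true :: x.1, by simp [x.2.1], by simp [List.count_cons]; omega⟩) s)) := by
      constructor
      · rintro (⟨l1, h1⟩ | ⟨l1, h1⟩) (⟨l2, h2⟩ | ⟨l2, h2⟩) h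
        · simp only [Sum.elim_inl, Subtype.mk.injEq, List.cons.injEq] at h
          exact congrArg Sum.inl (Subtype.ext h.2)
        · simp only [Sum.elim_inl, Sum.elim_inr, Subtype.mk.injEq, List.cons.injEq] at h
          exact absurd h.1 (by simp)
        · simp only [Sum.elim_inl, Sum.elim_inr, Subtype.mk.injEq, List.cons.injEq] at h
          exact absurd h.1 (by simp)
        · simp only [Sum.elim_inr, Subtype.mk.injEq, List.cons.injEq] at h
          exact congrArg Sum.inr (Subtype.ext h.2)
      · rintro ⟨l, hl, hc⟩
        cases l with
        | nil => simp at hl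
        | cons b t =>
          cases b with
          | false =>
            refine ⟨Sum.inl ⟨t, by simpa using hl, by simpa [List.count_cons] using hc⟩, rfl⟩
          | true =>
            refine ⟨Sum.inr ⟨t, by simpa using hl, ?_⟩, rfl⟩
            simp [List.count_cons] at hc
            omega
    have hcard := Nat.card_congr (Equiv.ofBijective _ hbij)
    rw [Nat.card_sum] at hcard
    rw [← hcard, ih k]
    cases k with
    | zero =>
      haveI : IsEmpty {l : List Bool // l.length = m ∧ l.count true + 1 = 0} := by
        constructor
        rintro ⟨l, h, h'⟩
        omega
      simp [Nat.card_of_isEmpty]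
    | succ k =>
      have he : Nat.card {l : List Bool // l.length = m ∧ l.count true + 1 = k + 1} =
          m.choose k := by
        rw [Nat.card_congr (Equiv.subtypeEquivRight
          (q := fun l : List Bool => l.length = m ∧ l.count true = k) (fun l => by
          constructor
          · rintro ⟨h1, h2⟩; exact ⟨h1, by omega⟩
          · rintro ⟨h1, h2⟩; exact ⟨h1, by omega⟩)), ih k]
      rw [he, Nat.choose_succ_succ']
      omega

theorem lvl_lower_bound (p : List Bool) (k : ℕ) : -(k : ℤ) ≤ lvl p k := by
  have h1 : (p.take k).count false ≤ (p.take k).length := List.count_le_length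
  have h2 := List.length_take_le k p
  simp only [lvl]
  omega

theorem card_W (n : ℕ) (hn : 1 ≤ n) :
    Nat.card {w : List Bool // WCond n w} = genChoose (2 * n - 1) ((n : ℤ) - 3) := by
  rcases lt_or_ge n 3 with h3 | h3
  · haveI : IsEmpty {w : List Bool // WCond n w} := by
      refine ⟨?_⟩
      rintro ⟨w, hlen, hend⟩
      have := lvl_lower_bound w (2 * n - 1)
      have hb : (2 * n - 1 : ℕ) ≤ 3 := by omega
      have : ((2 * n - 1 : ℕ) : ℤ) ≤ 3 := by exact_mod_cast hb
      omega
    rw [Nat.card_of_isEmpty, genChoose, if_neg (by omega)]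
  · have hiff : ∀ w : List Bool, WCond n w ↔ (w.length = 2 * n - 1 ∧ w.count true = n - 3) := by
      intro w
      constructor
      · rintro ⟨hlen, hend⟩
        refine ⟨hlen, ?_⟩
        have htake : w.take (2 * n - 1) = w := List.take_of_length_le (by omega)
        rw [lvl, htake] at hend
        have hcc := count_add_count w
        rw [hlen] at hcc
        omega
      · rintro ⟨hlen, hc⟩
        refine ⟨hlen, ?_⟩
        have htake : w.take (2 * n - 1) = w := List.take_of_length_le (by omega)
        rw [lvl, htake]
        have hcc := count_add_count w
        rw [hlen] at hcc
        have hc' : w.count true = n - 3 := hc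
        have h5 : (n : ℤ) - 3 = ((n - 3 : ℕ) : ℤ) := by omega
        omega
    rw [Nat.card_congr (Equiv.subtypeEquivRight hiff), card_count, genChoose,
      if_pos (by omega : (0:ℤ) ≤ (n:ℤ) - 3)]
    congr 1
    omega

end TP

theorem total_long_positive_tunnels (n : ℕ) (hn : 1 ≤ n) :
    Nat.card {x : List Bool × ℕ × ℕ //
      IsDyck n x.1 ∧ IsTunnel x.1 x.2.1 x.2.2 ∧ 0 < lvl x.1 x.2.1 ∧
        4 ≤ x.2.2 + 1 - x.2.1} =
      genChoose (2 * n - 1) ((n : ℤ) - 3) := by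
  rw [Nat.card_congr ((TP.equivMarked n).trans ((TP.equivCut n).trans (TP.equivFlip n)))]
  exact TP.card_W n hn
end

section
/- Let π be a permutation of {1,…,n} with b_3(π) = 1, and let (i,j) be its unique B_3-pair. Let σ be the permutation obtained from π by exchanging the entries π(i) and π(j) (so σ(i) = π(j), σ(j) = π(i), and σ agrees with π elsewhere). Then σ avoids the pattern 123; moreover σ(i) and σ(j) are right-to-left maxima of σ with no right-to-left maximum at a position strictly between i and j, and there exists an index k < i with σ(k) < σ(j). -/
/-- `(i,j)` is a B_3-pair of `π`: `i < j`, `π i < π j`, and there is at least one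
index `k < i` with `π k < π i`. -/
def B3Pair (n : ℕ) (π : Equiv.Perm (Fin n)) (i j : Fin n) : Prop :=
  i < j ∧ π i < π j ∧ ∃ k : Fin n, k < i ∧ π k < π i

/-- `σ` avoids the pattern `123`, i.e. has no increasing subsequence of length 3. -/
def Avoids123 (n : ℕ) (σ : Equiv.Perm (Fin n)) : Prop :=
  ¬ ∃ i j k : Fin n, i < j ∧ j < k ∧ σ i < σ j ∧ σ j < σ k

/-- `σ` has a right-to-left maximum at position `i` if `σ i > σ j` for every `j > i`. -/
def RTLMax (n : ℕ) (σ : Equiv.Perm (Fin n)) (i : Fin n) : Prop :=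
  ∀ j : Fin n, i < j → σ j < σ i

theorem swap_of_unique_b3_pair (n : ℕ) (hn : 1 ≤ n) (π : Equiv.Perm (Fin n))
    (hb : Nat.card {q : Fin n × Fin n // B3Pair n π q.1 q.2} = 1)
    (i j : Fin n) (hij : B3Pair n π i j) :
    Avoids123 n (Equiv.swap (π i) (π j) * π) ∧
    RTLMax n (Equiv.swap (π i) (π j) * π) i ∧
    RTLMax n (Equiv.swap (π i) (π j) * π) j ∧
    (∀ k : Fin n, i < k → k < j → ¬ RTLMax n (Equiv.swap (π i) (π j) * π) k) ∧
    (∃ k : Fin n, k < i ∧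
      (Equiv.swap (π i) (π j) * π) k < (Equiv.swap (π i) (π j) * π) j) := by
  obtain ⟨hij1, hab, k0, hk0i, hk0v⟩ := hij
  set σ := Equiv.swap (π i) (π j) * π with hσdef
  have hσi : σ i = π j := by
    simp [hσdef, Equiv.Perm.mul_apply, Equiv.swap_apply_left]
  have hσj : σ j = π i := by
    simp [hσdef, Equiv.Perm.mul_apply, Equiv.swap_apply_right]
  have hσ : ∀ m : Fin n, m ≠ i → m ≠ j → σ m = π m := by
    intro m hmi hmj
    simp [hσdef, Equiv.Perm.mul_apply,
      Equiv.swap_apply_of_ne_of_ne (fun h => hmi (π.injective h))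
        (fun h => hmj (π.injective h))]
  have huniq : ∀ p q : Fin n, B3Pair n π p q → p = i ∧ q = j := by
    intro p q hpq
    haveI := (Nat.card_eq_one_iff_unique.mp hb).1
    have h2 : ((p, q) : Fin n × Fin n) = (i, j) :=
      congrArg Subtype.val
        (Subsingleton.elim (⟨(p, q), hpq⟩ : {q : Fin n × Fin n // B3Pair n π q.1 q.2})
          ⟨(i, j), ⟨hij1, hab, k0, hk0i, hk0v⟩⟩)
    exact Prod.ext_iff.mp h2
  have fact1 : ∀ k : Fin n, i < k → k ≠ j → π k < π i := by
    intro k hk hkj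
    rcases lt_trichotomy (π k) (π i) with h | h | h
    · exact h
    · exact absurd (π.injective h) hk.ne'
    · exact absurd ((huniq i k ⟨hk, h, k0, hk0i, hk0v⟩).2) hkj
  refine ⟨?_, ?_, ?_, ?_, ?_⟩
  · -- Avoids123
    rintro ⟨p, q, r, hpq, hqr, h1, h2⟩
    rcases lt_trichotomy q i with hq | hq | hq
    · -- q < i, so p, q ∉ {i, j}
      have hpi : p ≠ i := ne_of_lt (hpq.trans hq)
      have hpj : p ≠ j := ne_of_lt ((hpq.trans hq).trans hij1)
      have hqj : q ≠ j := ne_of_lt (hq.trans hij1)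
      rw [hσ p hpi hpj, hσ q hq.ne hqj] at h1
      rw [hσ q hq.ne hqj] at h2
      by_cases hri : r = i
      · rw [hri, hσi] at h2
        exact absurd (huniq q j ⟨hq.trans hij1, h2, p, hpq, h1⟩).1 hq.ne
      · by_cases hrj : r = j
        · rw [hrj, hσj] at h2
          exact absurd (huniq q j ⟨hq.trans hij1, h2.trans hab, p, hpq, h1⟩).1 hq.ne
        · rw [hσ r hri hrj] at h2
          exact absurd (huniq q r ⟨hqr, h2, p, hpq, h1⟩).1 hq.ne
    · -- q = i
      rw [hq, hσi] at h2
      have hqr' : i < r := hq ▸ hqr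
      by_cases hrj : r = j
      · rw [hrj, hσj] at h2
        exact absurd h2 (not_lt.mpr hab.le)
      · rw [hσ r hqr'.ne' hrj] at h2
        exact lt_irrefl _ (h2.trans ((fact1 r hqr' hrj).trans hab))
    · -- i < q
      by_cases hqj : q = j
      · rw [hqj, hσj] at h2
        have hjr : j < r := hqj ▸ hqr
        rw [hσ r (ne_of_gt (hij1.trans hjr)) hjr.ne'] at h2
        exact absurd h2 (not_lt.mpr (fact1 r (hij1.trans hjr) hjr.ne').le)
      · rw [hσ q hq.ne' hqj] at h1 h2
        have hqa : π q < π i := fact1 q hq hqj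
        by_cases hpj : p = j
        · rw [hpj, hσj] at h1
          exact absurd h1 (not_lt.mpr hqa.le)
        · have hpi : p ≠ i := by
            intro h
            rw [h, hσi] at h1
            exact absurd (h1.trans hqa) (not_lt.mpr hab.le)
          rw [hσ p hpi hpj] at h1
          by_cases hrj : r = j
          · exact absurd (huniq q j ⟨hrj ▸ hqr, hqa.trans hab, p, hpq, h1⟩).1 hq.ne'
          · rw [hσ r (ne_of_gt (hq.trans hqr)) hrj] at h2
            exact absurd (huniq q r ⟨hqr, h2, p, hpq, h1⟩).1 hq.ne'
  · -- RTLMax i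
    intro m hm
    rw [hσi]
    by_cases hmj : m = j
    · rw [hmj, hσj]; exact hab
    · rw [hσ m hm.ne' hmj]
      exact (fact1 m hm hmj).trans hab
  · -- RTLMax j
    intro m hm
    rw [hσj, hσ m (ne_of_gt (hij1.trans hm)) hm.ne']
    exact fact1 m (hij1.trans hm) hm.ne'
  · -- no RTL max strictly between i and j
    intro k h1 h2 hr
    have hkj := hr j h2
    rw [hσj, hσ k h1.ne' h2.ne] at hkj
    exact absurd (fact1 k h1 h2.ne) (not_lt.mpr hkj.le)
  · -- witness below i
    refine ⟨k0, hk0i, ?_⟩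
    rw [hσj, hσ k0 (ne_of_lt hk0i) (ne_of_lt (hk0i.trans hij1))]
    exact hk0v
end

section
/- Let σ be a permutation of {1,…,n} avoiding the pattern 123, let i < j be positions such that σ(i) and σ(j) are right-to-left maxima of σ with no right-to-left maximum at a position strictly between i and j, and suppose there exists an index k < i with σ(k) < σ(j). Then the permutation π obtained from σ by exchanging the entries σ(i) and σ(j) satisfies b_3(π) = 1. -/
theorem swap_of_consecutive_rtl_maxima (n : ℕ) (hn : 1 ≤ n) (σ : Equiv.Perm (Fin n))
    (hav : Avoids123 n σ) (i j : Fin n) (hij : i < j)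
    (hi : RTLMax n σ i) (hj : RTLMax n σ j)
    (hbetween : ∀ k : Fin n, i < k → k < j → ¬ RTLMax n σ k)
    (hk : ∃ k : Fin n, k < i ∧ σ k < σ j) :
    Nat.card {q : Fin n × Fin n //
      B3Pair n (Equiv.swap (σ i) (σ j) * σ) q.1 q.2} = 1 := by
  obtain ⟨k₀, hk₀i, hk₀v⟩ := hk
  set π := Equiv.swap (σ i) (σ j) * σ with hπdef
  have hji : σ j < σ i := hi j hij
  have hπi : π i = σ j := by
    simp [hπdef]
  have hπj : π j = σ i := by
    simp [hπdef]
  have hπo : ∀ x : Fin n, x ≠ i → x ≠ j → π x = σ x := by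
    intro x hxi hxj
    simp only [hπdef, Equiv.Perm.mul_apply]
    exact Equiv.swap_apply_of_ne_of_ne (fun h => hxi (σ.injective h))
      (fun h => hxj (σ.injective h))
  -- key lemma: σ j is the maximum of σ over positions > i
  have hM : ∀ t : Fin n, i < t → σ t ≤ σ j := by
    intro t ht
    obtain ⟨m, hm, hmax⟩ := Finset.exists_max_image
      (Finset.univ.filter (fun s : Fin n => i < s)) σ ⟨j, by simp [hij]⟩
    simp only [Finset.mem_filter, Finset.mem_univ, true_and] at hm
    have hmax' : ∀ s : Fin n, i < s → σ s ≤ σ m := fun s hs => hmax s (by simp [hs])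
    have hRTL : RTLMax n σ m := by
      intro s hms
      exact lt_of_le_of_ne (hmax' s (lt_trans hm hms))
        (fun h => (ne_of_lt hms) (σ.injective h).symm)
    have hmj : m = j := by
      rcases lt_trichotomy m j with h | h | h
      · exact absurd hRTL (hbetween m hm h)
      · exact h
      · exact absurd (hmax' j hij) (not_le.mpr (hj m h))
    rw [← hmj]; exact hmax' t ht
  have hMlt : ∀ t : Fin n, i < t → t ≠ j → σ t < σ j := fun t ht htj =>
    lt_of_le_of_ne (hM t ht) (fun h => htj (σ.injective h))
  -- uniqueness
  have huniq : ∀ a b : Fin n, B3Pair n π a b → a = i ∧ b = j := by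
    rintro a b ⟨hab, hvab, k, hka, hvk⟩
    by_cases hai : a = i
    · subst hai
      by_cases hbj : b = j
      · exact ⟨rfl, hbj⟩
      · rw [hπi, hπo b (ne_of_gt hab) hbj] at hvab
        exact absurd hvab (not_lt.mpr (le_of_lt (hMlt b hab hbj)))
    · by_cases haj : a = j
      · rw [haj] at hvab hab
        have hbi : b ≠ i := ne_of_gt (lt_trans hij hab)
        have hbj : b ≠ j := ne_of_gt hab
        rw [hπj, hπo b hbi hbj] at hvab
        exact absurd hvab
          (not_lt.mpr (le_of_lt (lt_trans (hMlt b (lt_trans hij hab) hbj) hji)))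
      · exfalso
        by_cases hbi : b = i
        · rw [hbi] at hvab hab
          have haj' : a < j := lt_trans hab hij
          have hki : k ≠ i := ne_of_lt (lt_trans hka hab)
          have hkj : k ≠ j := ne_of_lt (lt_trans (lt_trans hka hab) hij)
          rw [hπo a (ne_of_lt hab) haj, hπi] at hvab
          rw [hπo k hki hkj, hπo a (ne_of_lt hab) haj] at hvk
          exact hav ⟨k, a, j, hka, haj', hvk, hvab⟩
        · by_cases hbj : b = j
          · rw [hbj] at hvab hab
            have hva : π a = σ a := hπo a hai haj
            by_cases hki : k = i
            · rw [hki] at hvk hka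
              rw [hπi, hva] at hvk
              exact absurd (hMlt a hka haj) (not_lt.mpr (le_of_lt hvk))
            · have hkj : k ≠ j := ne_of_lt (lt_trans hka hab)
              rw [hπo k hki hkj, hva] at hvk
              rw [hva, hπj] at hvab
              rcases lt_trichotomy a i with h | h | h
              · exact hav ⟨k, a, i, hka, h, hvk, hvab⟩
              · exact hai h
              · exact hav ⟨k, a, j, hka, hab, hvk, hMlt a h haj⟩
          · rw [hπo a hai haj, hπo b hbi hbj] at hvab
            by_cases hki : k = i
            · rw [hki] at hvk hka
              rw [hπi, hπo a hai haj] at hvk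
              exact absurd (hMlt a hka haj) (not_lt.mpr (le_of_lt hvk))
            · by_cases hkj : k = j
              · rw [hkj] at hvk hka
                rw [hπj, hπo a hai haj] at hvk
                have := hMlt a (lt_trans hij hka) haj
                exact absurd hvk (not_lt.mpr (le_of_lt (lt_trans this hji)))
              · rw [hπo k hki hkj, hπo a hai haj] at hvk
                exact hav ⟨k, a, b, hka, hab, hvk, hvab⟩
  -- existence
  have hmem : B3Pair n π i j := by
    refine ⟨hij, ?_, k₀, hk₀i, ?_⟩
    · rw [hπi, hπj]; exact hji
    · rw [hπo k₀ (ne_of_lt hk₀i) (ne_of_lt (lt_trans hk₀i hij)), hπi]; exact hk₀v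
  rw [Nat.card_eq_one_iff_unique]
  refine ⟨⟨fun p q => ?_⟩, ⟨⟨(i, j), hmem⟩⟩⟩
  obtain ⟨⟨a, b⟩, hp⟩ := p
  obtain ⟨⟨c, d⟩, hq⟩ := q
  obtain ⟨h1, h2⟩ := huniq a b hp
  obtain ⟨h3, h4⟩ := huniq c d hq
  subst h1; subst h2; subst h3; subst h4
  rfl
end
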